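/- arXiv:2202.03431 — 2 statements merged into one kernel-verified Lean document; each statement's English description precedes it below -/
import Mathlib

section
/- For every integer l ≥ 16, setting q = ⌊l/4⌋, the list color function threshold of the complete bipartite graph K_{2,l} satisfies τ(K_{2,l}) > ⌊(q/ln(16/7))^{1/2} + 1⌋. -/
/-- A proper coloring of the graph `G` from the list assignment `L` (colors are
natural numbers): every vertex gets a color from its list, and adjacent vertices
get different colors. -/
def IsProperListColoring {V : Type*} (G : SimpleGraph V) (L : V → Finset ℕ) (f : V → ℕ) : Prop :=
  (∀ v, f v ∈ L v) ∧ ∀ ⦃u w⦄, G.Adj u w → f u ≠ f w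

/-- `P(G, L)`: the number of proper `L`-colorings of `G`. -/
noncomputable def numListColorings {V : Type*} (G : SimpleGraph V) (L : V → Finset ℕ) : ℕ :=
  {f : V → ℕ | IsProperListColoring G L f}.ncard

/-- `P(G, m)`: the chromatic polynomial of `G` evaluated at `m`, i.e. the number of
proper colorings of `G` using colors from `{1, …, m}`. -/
noncomputable def chromPoly {V : Type*} (G : SimpleGraph V) (m : ℕ) : ℕ :=
  numListColorings G fun _ => Finset.Icc 1 m

/-- `L` is an `m`-assignment: every list has size `m`. -/
def IsAssignment {V : Type*} (L : V → Finset ℕ) (m : ℕ) : Prop :=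
  ∀ v, (L v).card = m

/-- `P_ℓ(G, m)`: the list color function, the minimum of `P(G, L)` over all
`m`-assignments `L` for `G`. -/
noncomputable def listColorFunction {V : Type*} (G : SimpleGraph V) (m : ℕ) : ℕ :=
  sInf {p | ∃ L : V → Finset ℕ, IsAssignment L m ∧ numListColorings G L = p}

/-- `χ(G)`: the chromatic number, the least `m` admitting a proper coloring with
colors from `{1, …, m}`. -/
noncomputable def chromNum {V : Type*} (G : SimpleGraph V) : ℕ :=
  sInf {m | 0 < chromPoly G m}

/-- `χ_ℓ(G)`: the list chromatic number, the least `k` such that `G` has a proper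
`L`-coloring for every `k`-assignment `L`. -/
noncomputable def listChromNum {V : Type*} (G : SimpleGraph V) : ℕ :=
  sInf {k | ∀ L : V → Finset ℕ, IsAssignment L k → ∃ f, IsProperListColoring G L f}

/-- `τ(G)`: the list color function threshold, the least `k ≥ χ(G)` such that
`P_ℓ(G, m) = P(G, m)` whenever `m ≥ k`. -/
noncomputable def lcfThreshold {V : Type*} (G : SimpleGraph V) : ℕ :=
  sInf {k | chromNum G ≤ k ∧ ∀ m, k ≤ m → listColorFunction G m = chromPoly G m}

/-- The complete bipartite graph `K_{2,l}`. -/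
def K2l (l : ℕ) : SimpleGraph (Fin 2 ⊕ Fin l) := completeBipartiteGraph (Fin 2) (Fin l)


open Finset

lemma K2l_master (l : ℕ) (L : (Fin 2 ⊕ Fin l) → Finset ℕ) :
    numListColorings (K2l l) L =
      ∑ p ∈ (L (Sum.inl 0)) ×ˢ (L (Sum.inl 1)),
        ∏ i : Fin l, ((L (Sum.inr i)) \ {p.1, p.2}).card := by
  classical
  set F : Finset ((Fin 2 ⊕ Fin l) → ℕ) :=
    (Fintype.piFinset L).filter
      (fun f => ∀ (j : Fin 2) (i : Fin l), f (Sum.inl j) ≠ f (Sum.inr i)) with hF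
  have hmemF : ∀ f, f ∈ F ↔ (∀ v, f v ∈ L v) ∧
      (∀ (j : Fin 2) (i : Fin l), f (Sum.inl j) ≠ f (Sum.inr i)) := by
    intro f
    simp [hF, Fintype.mem_piFinset]
  have hset : {f : (Fin 2 ⊕ Fin l) → ℕ | IsProperListColoring (K2l l) L f} = ↑F := by
    ext f
    simp only [Set.mem_setOf_eq, Finset.mem_coe, hmemF]
    constructor
    · rintro ⟨h1, h2⟩
      exact ⟨h1, fun j i => h2 (Or.inl ⟨rfl, rfl⟩)⟩
    · rintro ⟨h1, h2⟩
      refine ⟨h1, fun u w hadj => ?_⟩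
      rcases u with ju | iu <;> rcases w with jw | iw
      · simp [K2l, completeBipartiteGraph] at hadj
      · exact h2 ju iw
      · exact (h2 jw iu).symm
      · simp [K2l, completeBipartiteGraph] at hadj
  rw [numListColorings, hset, Set.ncard_coe_finset]
  have hmap : ∀ f ∈ F, (f (Sum.inl 0), f (Sum.inl 1)) ∈ (L (Sum.inl 0)) ×ˢ (L (Sum.inl 1)) := by
    intro f hf
    rw [hmemF] at hf
    exact Finset.mem_product.2 ⟨hf.1 _, hf.1 _⟩
  rw [Finset.card_eq_sum_card_fiberwise hmap]
  refine Finset.sum_congr rfl fun p hp => ?_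
  have hp' := Finset.mem_product.1 hp
  rw [← Fintype.card_piFinset]
  have hfiber : ∀ f, f ∈ F.filter (fun a => (a (Sum.inl 0), a (Sum.inl 1)) = p) ↔
      (∀ v, f v ∈ L v) ∧ (∀ (j : Fin 2) (i : Fin l), f (Sum.inl j) ≠ f (Sum.inr i)) ∧
      f (Sum.inl 0) = p.1 ∧ f (Sum.inl 1) = p.2 := by
    intro f
    rw [Finset.mem_filter, hmemF, Prod.ext_iff]
    tauto
  refine Finset.card_bij' (fun f _ => fun i => f (Sum.inr i))
    (fun g _ => Sum.elim (fun j => if j = 0 then p.1 else p.2) g) ?_ ?_ ?_ ?_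
  · intro f hf
    rw [hfiber] at hf
    obtain ⟨hmem, hproper, h0, h1⟩ := hf
    rw [Fintype.mem_piFinset]
    intro i
    rw [Finset.mem_sdiff]
    refine ⟨hmem _, ?_⟩
    simp only [Finset.mem_insert, Finset.mem_singleton, not_or]
    exact ⟨fun h => hproper 0 i (h0.trans h.symm), fun h => hproper 1 i (h1.trans h.symm)⟩
  · intro g hg
    rw [Fintype.mem_piFinset] at hg
    rw [hfiber]
    refine ⟨?_, ?_, by simp, by simp⟩
    · rintro (j | i)
      · by_cases h0 : j = 0
        · subst h0; simpa using hp'.1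
        · have h1 : j = 1 := by omega
          subst h1; simpa using hp'.2
      · exact (Finset.mem_sdiff.1 (hg i)).1
    · intro j i
      have hgi := (Finset.mem_sdiff.1 (hg i)).2
      simp only [Finset.mem_insert, Finset.mem_singleton, not_or] at hgi
      by_cases h0 : j = 0
      · subst h0
        simpa using fun h => hgi.1 h.symm
      · have h1 : j = 1 := by omega
        subst h1
        simpa using fun h => hgi.2 h.symm
  · intro f hf
    rw [hfiber] at hf
    funext v
    rcases v with j | i
    · by_cases h0 : j = 0
      · subst h0; simp [hf.2.2.1]
      · have h1 : j = 1 := by omega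
        subst h1; simp [hf.2.2.2, h0]
    · simp
  · intro g hg
    funext i
    simp

lemma chromPoly_K2l (l m : ℕ) :
    chromPoly (K2l l) m = m * (m-1)^l + m * (m-1) * (m-2)^l := by
  classical
  rw [chromPoly, K2l_master, Finset.sum_product]
  have hs : (Finset.Icc 1 m).card = m := by simp
  have hinner : ∀ a ∈ Icc 1 m, (∑ b ∈ Icc 1 m, ∏ _i : Fin l, ((Icc 1 m) \ {a, b}).card)
      = (m-1)^l + (m-1) * (m-2)^l := by
    intro a ha
    rw [← Finset.add_sum_erase _ _ ha]
    congr 1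
    · have hc : ((Icc 1 m) \ {a,a}).card = m - 1 := by
        rw [show ({a,a} : Finset ℕ) = {a} by simp,
          Finset.card_sdiff_of_subset (by simpa using ha), hs, Finset.card_singleton]
      rw [Finset.prod_const, hc]
      simp
    · rw [Finset.sum_congr rfl (fun b hb => ?_), Finset.sum_const,
        Finset.card_erase_of_mem ha, hs, smul_eq_mul]
      have hb' := Finset.mem_erase.1 hb
      have hsub : ({a, b} : Finset ℕ) ⊆ Icc 1 m := by
        intro x hx
        rcases Finset.mem_insert.1 hx with h | h
        · exact h ▸ ha
        · exact (Finset.mem_singleton.1 h) ▸ hb'.2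
      have hc : ((Icc 1 m) \ {a,b}).card = m - 2 := by
        rw [Finset.card_sdiff_of_subset hsub, hs, Finset.card_insert_of_notMem (by
          simp [Ne.symm hb'.1]), Finset.card_singleton]
      rw [Finset.prod_const, hc]
      simp
  rw [Finset.sum_congr rfl hinner, Finset.sum_const, hs, smul_eq_mul, Nat.mul_add, Nat.mul_assoc]

lemma prod_lb {ι : Type*} (m : ℕ) (hm : 2 ≤ m) (s : Finset ι) (e : ι → ℕ)
    (he : ∀ i ∈ s, e i ≤ 2) :
    (m-2)^s.card + (m-2)^(s.card - 1) * (∑ i ∈ s, (2 - e i)) ≤ ∏ i ∈ s, (m - e i) := by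
  classical
  induction s using Finset.cons_induction with
  | empty => simp
  | cons a s' ha ih =>
    have hea : e a ≤ 2 := he a (Finset.mem_cons_self _ _)
    have ihs := ih (fun i hi => he i (Finset.mem_cons_of_mem hi))
    rw [Finset.prod_cons, Finset.sum_cons, Finset.card_cons]
    have hma : m - e a = (m - 2) + (2 - e a) := by omega
    rcases Nat.eq_zero_or_pos s'.card with hc | hc
    · obtain rfl : s' = ∅ := Finset.card_eq_zero.1 hc
      simp [hma]
    · obtain ⟨c, hc'⟩ : ∃ c, s'.card = c + 1 := ⟨s'.card - 1, by omega⟩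
      calc (m-2)^(s'.card+1) + (m-2)^(s'.card+1-1) * ((2 - e a) + ∑ i ∈ s', (2 - e i))
          = ((m-2) + (2 - e a)) * (m-2)^s'.card
            + (m-2) * ((m-2)^(s'.card-1) * ∑ i ∈ s', (2 - e i)) := by
            simp only [hc', Nat.add_sub_cancel]; ring
        _ ≤ ((m-2) + (2 - e a)) * (m-2)^s'.card
            + ((m-2) + (2 - e a)) * ((m-2)^(s'.card-1) * ∑ i ∈ s', (2 - e i)) := by
            gcongr; omega
        _ = ((m-2) + (2 - e a)) * ((m-2)^s'.card + (m-2)^(s'.card-1) * ∑ i ∈ s', (2 - e i)) := by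
            ring
        _ ≤ (m - e a) * ∏ i ∈ s', (m - e i) := by
            rw [hma]; exact Nat.mul_le_mul_left _ ihs

lemma real_key {b : ℝ} {l : ℕ} (hl : 1 ≤ l) (hb : (l:ℝ) + 1 ≤ b) :
    (b+1)^l ≤ b^l + 3*l*b^(l-1) := by
  have hb0 : (0:ℝ) < b := by
    have : (1:ℝ) ≤ (l:ℝ) := by exact_mod_cast hl
    linarith
  have hx0 : (0:ℝ) ≤ (l:ℝ)/b := by positivity
  have h1 : (1 + 1/b) ≤ Real.exp (1/b) := by
    have := Real.add_one_le_exp (1/b); linarith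
  have h2 : (1+1/b)^l ≤ Real.exp ((l:ℝ) * (1/b)) := by
    rw [Real.exp_nat_mul]
    exact pow_le_pow_left₀ (by positivity) h1 l
  have h3 : (l:ℝ)/b ≤ 1 := by
    rw [div_le_one hb0]; linarith
  have h4 : Real.exp ((l:ℝ)/b) ≤ 3 := by
    calc Real.exp ((l:ℝ)/b) ≤ Real.exp 1 := Real.exp_le_exp.2 h3
      _ ≤ 3 := by linarith [Real.exp_one_lt_d9]
  have h5 : Real.exp ((l:ℝ)/b) ≤ 1 + ((l:ℝ)/b) * Real.exp ((l:ℝ)/b) := by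
    have := Real.add_one_le_exp (-((l:ℝ)/b))
    have h6 : (1 - (l:ℝ)/b) * Real.exp ((l:ℝ)/b) ≤ 1 := by
      calc (1 - (l:ℝ)/b) * Real.exp ((l:ℝ)/b)
          ≤ Real.exp (-((l:ℝ)/b)) * Real.exp ((l:ℝ)/b) := by
            apply mul_le_mul_of_nonneg_right _ (Real.exp_pos _).le
            linarith
        _ = 1 := by rw [← Real.exp_add]; simp
    nlinarith [Real.exp_pos ((l:ℝ)/b)]
  have h7 : (1+1/b)^l ≤ 1 + 3*((l:ℝ)/b) := by
    calc (1+1/b)^l ≤ Real.exp ((l:ℝ) * (1/b)) := h2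
      _ = Real.exp ((l:ℝ)/b) := by rw [mul_one_div]
      _ ≤ 1 + ((l:ℝ)/b) * Real.exp ((l:ℝ)/b) := h5
      _ ≤ 1 + 3*((l:ℝ)/b) := by nlinarith
  have hbl : b^l = b^(l-1) * b := by
    conv_lhs => rw [show l = (l-1) + 1 by omega]
    rw [pow_succ]
  calc (b+1)^l = (b * (1+1/b))^l := by field_simp
    _ = b^l * (1+1/b)^l := mul_pow _ _ _
    _ ≤ b^l * (1 + 3*((l:ℝ)/b)) := by
        apply mul_le_mul_of_nonneg_left h7 (by positivity)
    _ = b^l + 3*l*b^(l-1) := by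
        rw [mul_add, mul_one, hbl]
        field_simp

lemma key_nat {l m : ℕ} (hl : 1 ≤ l) (hm : l + 3 ≤ m) :
    (m-1)^l ≤ (m-2)^l + l * (m-1) * (m-2)^(l-1) := by
  have hm2 : 2 ≤ m := by omega
  have hcast : ((m:ℝ) - 2) + 1 = (m:ℝ) - 1 := by ring
  have hb : (l:ℝ) + 1 ≤ (m:ℝ) - 2 := by
    have : (l:ℝ) + 3 ≤ (m:ℝ) := by exact_mod_cast hm
    linarith
  have hkey := real_key hl hb
  rw [hcast] at hkey
  have h3 : (3:ℝ) ≤ (m:ℝ) - 1 := by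
    have : (l:ℝ) + 3 ≤ (m:ℝ) := by exact_mod_cast hm
    have : (1:ℝ) ≤ (l:ℝ) := by exact_mod_cast hl
    linarith
  have hfin : ((m:ℝ) - 1)^l ≤ ((m:ℝ)-2)^l + l * ((m:ℝ)-1) * ((m:ℝ)-2)^(l-1) := by
    calc ((m:ℝ) - 1)^l ≤ ((m:ℝ)-2)^l + 3*l*((m:ℝ)-2)^(l-1) := hkey
      _ ≤ ((m:ℝ)-2)^l + l * ((m:ℝ)-1) * ((m:ℝ)-2)^(l-1) := by
          have hpow : (0:ℝ) ≤ ((m:ℝ)-2)^(l-1) := by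
            apply pow_nonneg; linarith
          have hl0 : (0:ℝ) ≤ (l:ℝ) := Nat.cast_nonneg l
          have : 3*(l:ℝ)*((m:ℝ)-2)^(l-1) ≤ (l:ℝ) * ((m:ℝ)-1) * ((m:ℝ)-2)^(l-1) := by
            apply mul_le_mul_of_nonneg_right _ hpow
            nlinarith
          linarith
  have := hfin
  rw [show ((m:ℝ) - 1) = ((m - 1 : ℕ) : ℝ) by push_cast [Nat.cast_sub (by omega : 1 ≤ m)]; ring,
    show ((m:ℝ) - 2) = ((m - 2 : ℕ) : ℝ) by push_cast [Nat.cast_sub hm2]; ring] at this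
  exact_mod_cast this

lemma sum_y_card {s u : Finset ℕ} :
    ∑ c ∈ u, (if c ∈ s then 0 else 1) = (u \ s).card := by
  classical
  rw [Finset.sdiff_eq_filter, Finset.card_filter]
  exact Finset.sum_congr rfl fun c _ => by split_ifs with h <;> simp [h]

lemma P_ge (l m : ℕ) (hl : 1 ≤ l) (hm : l + 3 ≤ m)
    (A B : Finset ℕ) (Li : Fin l → Finset ℕ)
    (hA : A.card = m) (hB : B.card = m) (hLi : ∀ i, (Li i).card = m) :
    m * (m-1)^l + m*(m-1)*(m-2)^l ≤
      ∑ p ∈ A ×ˢ B, ∏ i : Fin l, ((Li i) \ {p.1, p.2}).card := by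
  classical
  have hm2 : 2 ≤ m := by omega
  set t := (A ∩ B).card with ht_def
  have ht : t ≤ m := hA ▸ Finset.card_le_card Finset.inter_subset_left
  set f : ℕ × ℕ → ℕ := fun p => ∏ i : Fin l, ((Li i) \ {p.1, p.2}).card with hf
  set S := A ×ˢ B with hS
  have hsplit : ∑ p ∈ S.filter (fun p => p.1 = p.2), f p
      + ∑ p ∈ S.filter (fun p => ¬ p.1 = p.2), f p = ∑ p ∈ S, f p :=
    Finset.sum_filter_add_sum_filter_not S _ f
  set D := S.filter (fun p => p.1 = p.2) with hD
  set O := S.filter (fun p => ¬ p.1 = p.2) with hO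
  have hDim : D = (A ∩ B).image (fun c => (c,c)) := by
    ext p
    simp only [hD, Finset.mem_filter, hS, Finset.mem_product, Finset.mem_image,
      Finset.mem_inter]
    constructor
    · rintro ⟨⟨h1, h2⟩, h3⟩
      exact ⟨p.1, ⟨h1, h3 ▸ h2⟩, Prod.ext_iff.2 ⟨rfl, h3⟩⟩
    · rintro ⟨c, ⟨h1, h2⟩, h3⟩
      rw [← h3]; exact ⟨⟨h1, h2⟩, rfl⟩
  have hDcard : D.card = t := by
    rw [hDim, Finset.card_image_of_injective _ (fun a b h => (Prod.ext_iff.1 h).1)]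
  have hScard : S.card = m * m := by rw [hS, Finset.card_product, hA, hB]
  have hOcard : O.card + t = m * m := by
    rw [← hDcard, ← hScard, hO, hD, add_comm]
    exact Finset.card_filter_add_card_filter_not _
  have hDbound : D.card * (m-1)^l ≤ ∑ p ∈ D, f p := by
    rw [← smul_eq_mul]
    apply Finset.card_nsmul_le_sum
    intro p hp
    rw [hD, Finset.mem_filter] at hp
    show (m-1)^l ≤ ∏ i : Fin l, ((Li i) \ {p.1, p.2}).card
    calc (m-1)^l = ∏ _i : Fin l, (m-1) := by simp
      _ ≤ ∏ i : Fin l, ((Li i) \ {p.1, p.2}).card := by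
          apply Finset.prod_le_prod'
          intro i _
          have hpair : ({p.1, p.2} : Finset ℕ) = {p.1} := by rw [← hp.2]; simp
          rw [hpair]
          have h5 := Finset.le_card_sdiff {p.1} (Li i)
          have h6 := hLi i
          simp only [Finset.card_singleton] at h5
          omega
  set e : ℕ × ℕ → Fin l → ℕ := fun p i => ((Li i) ∩ {p.1, p.2}).card with he
  have hcard_e : ∀ (p : ℕ × ℕ), ∀ i, ((Li i) \ {p.1, p.2}).card = m - e p i := by
    intro p i
    rw [he, ← Finset.sdiff_inter_self_left, Finset.card_sdiff_of_subset Finset.inter_subset_left, hLi]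
  have he2 : ∀ p i, e p i ≤ 2 := by
    intro p i
    calc ((Li i) ∩ {p.1, p.2}).card ≤ ({p.1, p.2} : Finset ℕ).card :=
        Finset.card_le_card Finset.inter_subset_right
      _ ≤ 2 := le_trans (Finset.card_insert_le _ _) (by simp)
  have hObound : ∀ p ∈ O,
      (m-2)^l + (m-2)^(l-1) * (∑ i : Fin l, (2 - e p i)) ≤ f p := by
    intro p _
    show _ ≤ ∏ i : Fin l, ((Li i) \ {p.1, p.2}).card
    calc (m-2)^l + (m-2)^(l-1) * (∑ i : Fin l, (2 - e p i))
        ≤ ∏ i : Fin l, (m - e p i) := by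
          simpa using prod_lb m hm2 (Finset.univ : Finset (Fin l)) (e p) (fun i _ => he2 p i)
      _ = ∏ i : Fin l, ((Li i) \ {p.1, p.2}).card :=
          Finset.prod_congr rfl (fun i _ => (hcard_e p i).symm)
  have hcount : ∀ i : Fin l, (m-1) * (m-t) ≤ ∑ p ∈ O, (2 - e p i) := by
    intro i
    set s := Li i with hs
    set y : ℕ → ℕ := fun c => if c ∈ s then 0 else 1 with hy
    have hstep1 : ∀ p ∈ O, 2 - e p i = y p.1 + y p.2 := by
      intro p hp
      rw [hO, Finset.mem_filter] at hp
      have hne : p.1 ≠ p.2 := hp.2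
      have hpair : (s ∩ {p.1, p.2}).card = (({p.1, p.2} : Finset ℕ).filter (· ∈ s)).card := by
        rw [Finset.filter_mem_eq_inter, Finset.inter_comm]
      rw [he]
      simp only [← hs, hpair, Finset.card_filter]
      rw [Finset.sum_insert (by simpa using hne), Finset.sum_singleton]
      simp only [hy]
      split_ifs <;> omega
    rw [Finset.sum_congr rfl hstep1]
    set SA := ∑ c ∈ A, y c with hSA
    set SB := ∑ c ∈ B, y c with hSB
    set SI := ∑ c ∈ A ∩ B, y c with hSI
    set SU := ∑ c ∈ A ∪ B, y c with hSU
    have hSsum : ∑ p ∈ S, (y p.1 + y p.2) = m * SA + m * SB := by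
      rw [hS, Finset.sum_product]
      have hrow : ∀ a ∈ A, ∑ b ∈ B, (y a + y b) = m * y a + SB := by
        intro a _
        rw [Finset.sum_add_distrib, Finset.sum_const, hB, smul_eq_mul]
      rw [Finset.sum_congr rfl hrow, Finset.sum_add_distrib, ← Finset.mul_sum,
        Finset.sum_const, hA, smul_eq_mul]
    have hDsum : ∑ p ∈ D, (y p.1 + y p.2) = 2 * SI := by
      rw [hDim, Finset.sum_image (fun a _ b _ h => (Prod.ext_iff.1 h).1), hSI, Finset.mul_sum]
      exact Finset.sum_congr rfl fun c _ => by show y c + y c = 2 * y c; omega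
    have hOD : ∑ p ∈ D, (y p.1 + y p.2) + ∑ p ∈ O, (y p.1 + y p.2)
        = ∑ p ∈ S, (y p.1 + y p.2) := Finset.sum_filter_add_sum_filter_not S _ _
    have hIA : SI ≤ SA := Finset.sum_le_sum_of_subset Finset.inter_subset_left
    have hIB : SI ≤ SB := Finset.sum_le_sum_of_subset Finset.inter_subset_right
    have hUI : SU + SI = SA + SB := Finset.sum_union_inter
    have hUy : m - t ≤ SU := by
      have h1 : SU = ((A ∪ B) \ s).card := by rw [hSU, hy]; exact sum_y_card
      have h2 : (A ∪ B).card + t = m + m := by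
        rw [ht_def, Finset.card_union_add_card_inter A B, hA, hB]
      have h3 := Finset.le_card_sdiff s (A ∪ B)
      have h4 : s.card = m := hLi i
      omega
    set X := SA + SB with hX
    set Pm := (m-1) * X with hPm
    have hmX : m * X = Pm + X := by
      rw [hPm, ← Nat.succ_mul]
      congr 1
      omega
    have hkey : ∑ p ∈ O, (y p.1 + y p.2) + 2 * SI = Pm + X := by
      rw [← hmX, hX, Nat.mul_add, ← hSsum, ← hOD, hDsum]; ring
    have hfin : Pm ≤ ∑ p ∈ O, (y p.1 + y p.2) := by omega
    calc (m-1) * (m-t) ≤ (m-1) * SU := Nat.mul_le_mul_left _ hUy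
      _ ≤ (m-1) * X := Nat.mul_le_mul_left _ (by omega)
      _ ≤ _ := hfin
  have hOsum : O.card * (m-2)^l + (m-2)^(l-1) * (l * ((m-1) * (m-t)))
      ≤ ∑ p ∈ O, f p := by
    calc O.card * (m-2)^l + (m-2)^(l-1) * (l * ((m-1) * (m-t)))
        ≤ O.card * (m-2)^l + (m-2)^(l-1) * (∑ p ∈ O, ∑ i : Fin l, (2 - e p i)) := by
          apply Nat.add_le_add_left
          apply Nat.mul_le_mul_left
          calc l * ((m-1) * (m-t)) = ∑ _i : Fin l, (m-1)*(m-t) := by simp [mul_comm]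
            _ ≤ ∑ i : Fin l, ∑ p ∈ O, (2 - e p i) :=
                Finset.sum_le_sum fun i _ => hcount i
            _ = ∑ p ∈ O, ∑ i : Fin l, (2 - e p i) := Finset.sum_comm
      _ = ∑ p ∈ O, ((m-2)^l + (m-2)^(l-1) * (∑ i : Fin l, (2 - e p i))) := by
          rw [Finset.sum_add_distrib, Finset.sum_const, Finset.mul_sum, smul_eq_mul]
      _ ≤ ∑ p ∈ O, f p := Finset.sum_le_sum hObound
  have hkey2 := key_nat hl hm
  have hmm : m*(m-1) + m = m*m := by
    obtain ⟨k, rfl⟩ : ∃ k, m = 1 + k := ⟨m - 1, by omega⟩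
    simp [Nat.add_sub_cancel_left]
    ring
  set Q1 := (m-1)^l with hQ1
  set Q2 := (m-2)^l with hQ2
  set Q3 := (m-2)^(l-1) with hQ3
  have hC : m * Q1 + m*(m-1)*Q2 ≤ t * Q1 + (m*m - t) * Q2 + Q3 * (l * ((m-1)*(m-t))) := by
    have h1 : m * Q1 = t * Q1 + (m-t) * Q1 := by
      rw [← Nat.add_mul]; congr 1; omega
    have h2 : (m-t) * Q1 ≤ (m-t) * Q2 + (m-t) * (l * (m-1) * Q3) := by
      calc (m-t) * Q1 ≤ (m-t) * (Q2 + l * (m-1) * Q3) := Nat.mul_le_mul_left _ hkey2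
        _ = (m-t) * Q2 + (m-t) * (l * (m-1) * Q3) := by ring
    have h3 : (m-t) * Q2 + m*(m-1)*Q2 = (m*m - t) * Q2 := by
      rw [← Nat.add_mul]
      congr 1
      omega
    have h4 : (m-t) * (l * (m-1) * Q3) = Q3 * (l * ((m-1)*(m-t))) := by ring
    calc m * Q1 + m*(m-1)*Q2 = t * Q1 + (m-t) * Q1 + m*(m-1)*Q2 := by rw [h1]
      _ ≤ t * Q1 + ((m-t) * Q2 + (m-t) * (l * (m-1) * Q3)) + m*(m-1)*Q2 := by
          apply Nat.add_le_add_right; exact Nat.add_le_add_left h2 _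
      _ = t * Q1 + ((m-t) * Q2 + m*(m-1)*Q2) + (m-t) * (l * (m-1) * Q3) := by ring
      _ = t * Q1 + (m*m - t) * Q2 + Q3 * (l * ((m-1)*(m-t))) := by rw [h3, h4]
  calc m * Q1 + m*(m-1)*Q2 ≤ t * Q1 + (m*m - t) * Q2 + Q3 * (l * ((m-1)*(m-t))) := hC
    _ = D.card * Q1 + (O.card * Q2 + Q3 * (l * ((m-1)*(m-t)))) := by
        rw [hDcard]
        have h7 : m*m - t = O.card := by omega
        rw [h7]; ring
    _ ≤ ∑ p ∈ D, f p + ∑ p ∈ O, f p := Nat.add_le_add hDbound hOsum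
    _ = ∑ p ∈ S, f p := hsplit

def Istar (m : ℕ) : Finset ℕ := Finset.Icc 5 (m+2)

def spg (n1 q : ℕ) (j : ℕ) : Finset ℕ :=
  if j < n1 then {2,4} else if j < n1+q then {2,3} else if j < n1+2*q then {1,4} else {1,3}

def Lstar (l q n1 m : ℕ) : (Fin 2 ⊕ Fin l) → Finset ℕ
  | Sum.inl j => if j = 0 then Istar m ∪ {1, 2} else Istar m ∪ {3, 4}
  | Sum.inr i => Istar m ∪ spg n1 q i.val

lemma Istar_card (m : ℕ) : (Istar m).card = m - 2 := by
  simp [Istar]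

lemma not_mem_Istar {k : ℕ} (hk : k ≤ 4) (m : ℕ) : k ∉ Istar m := by
  simp only [Istar, Finset.mem_Icc, not_and]
  omega

lemma mem_Istar_ge {c m : ℕ} (hc : c ∈ Istar m) : 5 ≤ c := by
  simp only [Istar, Finset.mem_Icc] at hc
  exact hc.1

lemma Istar_union_pair_card {m x y : ℕ} (hm : 2 ≤ m) (hx : x ≤ 4) (hy : y ≤ 4)
    (hxy : x ≠ y) : (Istar m ∪ {x, y}).card = m := by
  rw [Finset.card_union_of_disjoint, Istar_card, Finset.card_insert_of_notMem (by simpa using hxy),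
    Finset.card_singleton]
  · omega
  · rw [Finset.disjoint_right]
    intro c hc
    have : c ≤ 4 := by
      rcases Finset.mem_insert.1 hc with h | h
      · omega
      · rw [Finset.mem_singleton] at h; omega
    intro hc'
    have := mem_Istar_ge hc'
    omega

lemma card_inter_pair {s : Finset ℕ} {c d : ℕ} (h : c ≠ d) :
    (s ∩ {c,d}).card = (if c ∈ s then 1 else 0) + (if d ∈ s then 1 else 0) := by
  classical
  rw [Finset.inter_comm, ← Finset.filter_mem_eq_inter, Finset.card_filter,
    Finset.sum_insert (by simpa using h), Finset.sum_singleton]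

lemma card_sdiff_pair {s : Finset ℕ} {mm : ℕ} (hs : s.card = mm) (c d : ℕ) :
    (s \ {c,d}).card = mm - (s ∩ {c,d}).card := by
  rw [← Finset.sdiff_inter_self_left, Finset.card_sdiff_of_subset Finset.inter_subset_left, hs]

lemma prod_range_four {l n1 q n4 : ℕ} (h : n1 + 2*q + n4 = l) (c1 c2 c3 c4 : ℕ) :
    (∏ j ∈ Finset.range l,
      (if j < n1 then c1 else if j < n1+q then c2 else if j < n1+2*q then c3 else c4))
      = c1^n1 * c2^q * c3^q * c4^n4 := by
  rw [Finset.range_eq_Ico,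
    ← Finset.prod_Ico_consecutive _ (Nat.zero_le n1) (by omega : n1 ≤ l),
    ← Finset.prod_Ico_consecutive _ (by omega : n1 ≤ n1+q) (by omega : n1+q ≤ l),
    ← Finset.prod_Ico_consecutive _ (by omega : n1+q ≤ n1+2*q) (by omega : n1+2*q ≤ l)]
  have e1 : (∏ j ∈ Finset.Ico 0 n1,
      (if j < n1 then c1 else if j < n1+q then c2 else if j < n1+2*q then c3 else c4)) = c1^n1 := by
    rw [Finset.prod_congr rfl (g := fun _ => c1) (fun j hj => by
      rw [Finset.mem_Ico] at hj; rw [if_pos hj.2]), Finset.prod_const, Nat.card_Ico, Nat.sub_zero]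
  have e2 : (∏ j ∈ Finset.Ico n1 (n1+q),
      (if j < n1 then c1 else if j < n1+q then c2 else if j < n1+2*q then c3 else c4)) = c2^q := by
    rw [Finset.prod_congr rfl (g := fun _ => c2) (fun j hj => by
      rw [Finset.mem_Ico] at hj
      rw [if_neg (by omega), if_pos hj.2]), Finset.prod_const, Nat.card_Ico]
    congr 1; omega
  have e3 : (∏ j ∈ Finset.Ico (n1+q) (n1+2*q),
      (if j < n1 then c1 else if j < n1+q then c2 else if j < n1+2*q then c3 else c4)) = c3^q := by
    rw [Finset.prod_congr rfl (g := fun _ => c3) (fun j hj => by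
      rw [Finset.mem_Ico] at hj
      rw [if_neg (by omega), if_neg (by omega), if_pos hj.2]), Finset.prod_const, Nat.card_Ico]
    congr 1; omega
  have e4 : (∏ j ∈ Finset.Ico (n1+2*q) l,
      (if j < n1 then c1 else if j < n1+q then c2 else if j < n1+2*q then c3 else c4)) = c4^n4 := by
    rw [Finset.prod_congr rfl (g := fun _ => c4) (fun j hj => by
      rw [Finset.mem_Ico] at hj
      rw [if_neg (by omega), if_neg (by omega), if_neg (by omega)]), Finset.prod_const, Nat.card_Ico]
    congr 1; omega
  rw [e1, e2, e3, e4]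
  ring

lemma W_eval {l q n1 n4 m : ℕ} (hm : 2 ≤ m) (h : n1 + 2*q + n4 = l) {ca cb : ℕ}
    (c1 c2 c3 c4 : ℕ)
    (h1 : ((Istar m ∪ {2,4}) ∩ {ca, cb}).card = c1)
    (h2 : ((Istar m ∪ {2,3}) ∩ {ca, cb}).card = c2)
    (h3 : ((Istar m ∪ {1,4}) ∩ {ca, cb}).card = c3)
    (h4 : ((Istar m ∪ {1,3}) ∩ {ca, cb}).card = c4) :
    (∏ i : Fin l, ((Lstar l q n1 m (Sum.inr i)) \ {ca, cb}).card)
      = (m-c1)^n1 * (m-c2)^q * (m-c3)^q * (m-c4)^n4 := by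
  have hcard : ∀ j : ℕ, (Istar m ∪ spg n1 q j).card = m := by
    intro j
    unfold spg
    split_ifs <;> apply Istar_union_pair_card hm (by norm_num) (by norm_num) (by norm_num)
  have hfac : ∀ i : Fin l, ((Lstar l q n1 m (Sum.inr i)) \ {ca, cb}).card
      = (fun j : ℕ => if j < n1 then m-c1 else if j < n1+q then m-c2
          else if j < n1+2*q then m-c3 else m-c4) (i : ℕ) := by
    intro i
    show ((Istar m ∪ spg n1 q i.val) \ {ca,cb}).card = _
    simp only []
    rw [card_sdiff_pair (hcard i.val)]
    unfold spg
    split_ifs with g1 g2 g3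
    · rw [h1]
    · rw [h2]
    · rw [h3]
    · rw [h4]
  calc (∏ i : Fin l, ((Lstar l q n1 m (Sum.inr i)) \ {ca, cb}).card)
      = ∏ i : Fin l, (fun j : ℕ => if j < n1 then m-c1 else if j < n1+q then m-c2
          else if j < n1+2*q then m-c3 else m-c4) (i : ℕ) :=
        Finset.prod_congr rfl (fun i _ => hfac i)
    _ = ∏ j ∈ Finset.range l, (if j < n1 then m-c1 else if j < n1+q then m-c2
          else if j < n1+2*q then m-c3 else m-c4) := Fin.prod_univ_eq_prod_range
        (fun j : ℕ => if j < n1 then m-c1 else if j < n1+q then m-c2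
          else if j < n1+2*q then m-c3 else m-c4) l
    _ = (m-c1)^n1 * (m-c2)^q * (m-c3)^q * (m-c4)^n4 := prod_range_four h _ _ _ _

lemma Lstar_inr_card {q n1 m : ℕ} (hm : 2 ≤ m) (j : ℕ) : (Istar m ∪ spg n1 q j).card = m := by
  unfold spg
  split_ifs <;> apply Istar_union_pair_card hm (by norm_num) (by norm_num) (by norm_num)

lemma disj_Istar_pair {m x y : ℕ} (hx : x ≤ 4) (hy : y ≤ 4) :
    Disjoint (Istar m) ({x, y} : Finset ℕ) := by
  rw [Finset.disjoint_left]
  intro c hc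
  have := mem_Istar_ge hc
  simp only [Finset.mem_insert, Finset.mem_singleton]
  push_neg
  omega

lemma P_eval (l q n1 n4 m : ℕ) (hm : 3 ≤ m) (h : n1 + 2*q + n4 = l) :
    numListColorings (K2l l) (Lstar l q n1 m)
      = (m-2)*(m-1)^l + (m-2)*(m-3)*(m-2)^l
      + 2*(m-2)*((m-1)^(n1+q)*(m-2)^(q+n4) + (m-1)^(q+n4)*(m-2)^(n1+q))
      + (m^n1*(m-1)^(2*q)*(m-2)^n4 + (m-2)^n1*(m-1)^(2*q)*m^n4)
      + 2*(m^q*(m-2)^q*(m-1)^(n1+n4)) := by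
  classical
  have hm2 : 2 ≤ m := by omega
  set W : ℕ → ℕ → ℕ :=
    fun ca cb => ∏ i : Fin l, ((Lstar l q n1 m (Sum.inr i)) \ {ca, cb}).card with hWdef
  -- diagonal
  have hW_diag : ∀ ca ∈ Istar m, W ca ca = (m-1)^l := by
    intro ca hca
    have hfac : ∀ i : Fin l, ((Lstar l q n1 m (Sum.inr i)) \ {ca, ca}).card = m - 1 := by
      intro i
      rw [show ({ca,ca} : Finset ℕ) = {ca} by simp]
      show ((Istar m ∪ spg n1 q i.val) \ {ca}).card = m - 1
      rw [Finset.card_sdiff_of_subset (Finset.singleton_subset_iff.2 (Finset.mem_union_left _ hca)),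
        Lstar_inr_card hm2, Finset.card_singleton]
    rw [hWdef]
    simp only []
    rw [Finset.prod_congr rfl (fun i _ => hfac i), Finset.prod_const]
    simp
  -- I × I off-diagonal
  have hW_II : ∀ ca ∈ Istar m, ∀ cb ∈ Istar m, ca ≠ cb →
      W ca cb = (m-2)^n1*(m-2)^q*(m-2)^q*(m-2)^n4 := by
    intro ca hca cb hcb hne
    exact W_eval hm2 h 2 2 2 2
      (by rw [card_inter_pair hne, if_pos (Finset.mem_union_left _ hca),
        if_pos (Finset.mem_union_left _ hcb)])
      (by rw [card_inter_pair hne, if_pos (Finset.mem_union_left _ hca),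
        if_pos (Finset.mem_union_left _ hcb)])
      (by rw [card_inter_pair hne, if_pos (Finset.mem_union_left _ hca),
        if_pos (Finset.mem_union_left _ hcb)])
      (by rw [card_inter_pair hne, if_pos (Finset.mem_union_left _ hca),
        if_pos (Finset.mem_union_left _ hcb)])
  have hnotmem : ∀ c : ℕ, c ≤ 4 → ∀ x y : ℕ, 1 ≤ x → x ≤ 4 → 1 ≤ y → y ≤ 4 →
      c ≠ x → c ≠ y → c ∉ Istar m ∪ ({x, y} : Finset ℕ) := by
    intro c hc x y _ _ _ _ hcx hcy
    rw [Finset.mem_union]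
    push_neg
    refine ⟨not_mem_Istar hc m, ?_⟩
    simp only [Finset.mem_insert, Finset.mem_singleton]
    push_neg
    exact ⟨hcx, hcy⟩
  have hmemlit : ∀ c x y : ℕ, (c = x ∨ c = y) → c ∈ Istar m ∪ ({x, y} : Finset ℕ) := by
    intro c x y hc
    apply Finset.mem_union_right
    simp only [Finset.mem_insert, Finset.mem_singleton]
    exact hc
  -- ca ∈ I, cb = 3 or 4
  have hW_I3 : ∀ ca ∈ Istar m, W ca 3 = (m-1)^n1*(m-2)^q*(m-1)^q*(m-2)^n4 := by
    intro ca hca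
    have h5 := mem_Istar_ge hca
    have hne : ca ≠ 3 := by omega
    exact W_eval hm2 h 1 2 1 2
      (by rw [card_inter_pair hne, if_pos (Finset.mem_union_left _ hca),
        if_neg (hnotmem 3 (by norm_num) 2 4 (by norm_num) (by norm_num) (by norm_num) (by norm_num) (by norm_num) (by norm_num))])
      (by rw [card_inter_pair hne, if_pos (Finset.mem_union_left _ hca),
        if_pos (hmemlit 3 2 3 (Or.inr rfl))])
      (by rw [card_inter_pair hne, if_pos (Finset.mem_union_left _ hca),
        if_neg (hnotmem 3 (by norm_num) 1 4 (by norm_num) (by norm_num) (by norm_num) (by norm_num) (by norm_num) (by norm_num))])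
      (by rw [card_inter_pair hne, if_pos (Finset.mem_union_left _ hca),
        if_pos (hmemlit 3 1 3 (Or.inr rfl))])
  have hW_I4 : ∀ ca ∈ Istar m, W ca 4 = (m-2)^n1*(m-1)^q*(m-2)^q*(m-1)^n4 := by
    intro ca hca
    have h5 := mem_Istar_ge hca
    have hne : ca ≠ 4 := by omega
    exact W_eval hm2 h 2 1 2 1
      (by rw [card_inter_pair hne, if_pos (Finset.mem_union_left _ hca),
        if_pos (hmemlit 4 2 4 (Or.inr rfl))])
      (by rw [card_inter_pair hne, if_pos (Finset.mem_union_left _ hca),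
        if_neg (hnotmem 4 (by norm_num) 2 3 (by norm_num) (by norm_num) (by norm_num) (by norm_num) (by norm_num) (by norm_num))])
      (by rw [card_inter_pair hne, if_pos (Finset.mem_union_left _ hca),
        if_pos (hmemlit 4 1 4 (Or.inr rfl))])
      (by rw [card_inter_pair hne, if_pos (Finset.mem_union_left _ hca),
        if_neg (hnotmem 4 (by norm_num) 1 3 (by norm_num) (by norm_num) (by norm_num) (by norm_num) (by norm_num) (by norm_num))])
  -- ca = 1 or 2, cb ∈ I
  have hW_1I : ∀ cb ∈ Istar m, W 1 cb = (m-1)^n1*(m-1)^q*(m-2)^q*(m-2)^n4 := by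
    intro cb hcb
    have h5 := mem_Istar_ge hcb
    have hne : (1:ℕ) ≠ cb := by omega
    exact W_eval hm2 h 1 1 2 2
      (by rw [card_inter_pair hne, if_neg (hnotmem 1 (by norm_num) 2 4 (by norm_num) (by norm_num) (by norm_num) (by norm_num) (by norm_num) (by norm_num)),
        if_pos (Finset.mem_union_left _ hcb)])
      (by rw [card_inter_pair hne, if_neg (hnotmem 1 (by norm_num) 2 3 (by norm_num) (by norm_num) (by norm_num) (by norm_num) (by norm_num) (by norm_num)),
        if_pos (Finset.mem_union_left _ hcb)])
      (by rw [card_inter_pair hne, if_pos (hmemlit 1 1 4 (Or.inl rfl)),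
        if_pos (Finset.mem_union_left _ hcb)])
      (by rw [card_inter_pair hne, if_pos (hmemlit 1 1 3 (Or.inl rfl)),
        if_pos (Finset.mem_union_left _ hcb)])
  have hW_2I : ∀ cb ∈ Istar m, W 2 cb = (m-2)^n1*(m-2)^q*(m-1)^q*(m-1)^n4 := by
    intro cb hcb
    have h5 := mem_Istar_ge hcb
    have hne : (2:ℕ) ≠ cb := by omega
    exact W_eval hm2 h 2 2 1 1
      (by rw [card_inter_pair hne, if_pos (hmemlit 2 2 4 (Or.inl rfl)),
        if_pos (Finset.mem_union_left _ hcb)])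
      (by rw [card_inter_pair hne, if_pos (hmemlit 2 2 3 (Or.inl rfl)),
        if_pos (Finset.mem_union_left _ hcb)])
      (by rw [card_inter_pair hne, if_neg (hnotmem 2 (by norm_num) 1 4 (by norm_num) (by norm_num) (by norm_num) (by norm_num) (by norm_num) (by norm_num)),
        if_pos (Finset.mem_union_left _ hcb)])
      (by rw [card_inter_pair hne, if_neg (hnotmem 2 (by norm_num) 1 3 (by norm_num) (by norm_num) (by norm_num) (by norm_num) (by norm_num) (by norm_num)),
        if_pos (Finset.mem_union_left _ hcb)])
  -- corners
  have hW13 : W 1 3 = m^n1*(m-1)^q*(m-1)^q*(m-2)^n4 :=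
    W_eval hm2 h 0 1 1 2
      (by rw [card_inter_pair (by norm_num : (1:ℕ) ≠ 3),
        if_neg (hnotmem 1 (by norm_num) 2 4 (by norm_num) (by norm_num) (by norm_num) (by norm_num) (by norm_num) (by norm_num)),
        if_neg (hnotmem 3 (by norm_num) 2 4 (by norm_num) (by norm_num) (by norm_num) (by norm_num) (by norm_num) (by norm_num))])
      (by rw [card_inter_pair (by norm_num : (1:ℕ) ≠ 3),
        if_neg (hnotmem 1 (by norm_num) 2 3 (by norm_num) (by norm_num) (by norm_num) (by norm_num) (by norm_num) (by norm_num)),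
        if_pos (hmemlit 3 2 3 (Or.inr rfl))])
      (by rw [card_inter_pair (by norm_num : (1:ℕ) ≠ 3),
        if_pos (hmemlit 1 1 4 (Or.inl rfl)),
        if_neg (hnotmem 3 (by norm_num) 1 4 (by norm_num) (by norm_num) (by norm_num) (by norm_num) (by norm_num) (by norm_num))])
      (by rw [card_inter_pair (by norm_num : (1:ℕ) ≠ 3),
        if_pos (hmemlit 1 1 3 (Or.inl rfl)), if_pos (hmemlit 3 1 3 (Or.inr rfl))])
  have hW14 : W 1 4 = (m-1)^n1*m^q*(m-2)^q*(m-1)^n4 :=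
    W_eval hm2 h 1 0 2 1
      (by rw [card_inter_pair (by norm_num : (1:ℕ) ≠ 4),
        if_neg (hnotmem 1 (by norm_num) 2 4 (by norm_num) (by norm_num) (by norm_num) (by norm_num) (by norm_num) (by norm_num)),
        if_pos (hmemlit 4 2 4 (Or.inr rfl))])
      (by rw [card_inter_pair (by norm_num : (1:ℕ) ≠ 4),
        if_neg (hnotmem 1 (by norm_num) 2 3 (by norm_num) (by norm_num) (by norm_num) (by norm_num) (by norm_num) (by norm_num)),
        if_neg (hnotmem 4 (by norm_num) 2 3 (by norm_num) (by norm_num) (by norm_num) (by norm_num) (by norm_num) (by norm_num))])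
      (by rw [card_inter_pair (by norm_num : (1:ℕ) ≠ 4),
        if_pos (hmemlit 1 1 4 (Or.inl rfl)), if_pos (hmemlit 4 1 4 (Or.inr rfl))])
      (by rw [card_inter_pair (by norm_num : (1:ℕ) ≠ 4),
        if_pos (hmemlit 1 1 3 (Or.inl rfl)),
        if_neg (hnotmem 4 (by norm_num) 1 3 (by norm_num) (by norm_num) (by norm_num) (by norm_num) (by norm_num) (by norm_num))])
  have hW23 : W 2 3 = (m-1)^n1*(m-2)^q*m^q*(m-1)^n4 :=
    W_eval hm2 h 1 2 0 1
      (by rw [card_inter_pair (by norm_num : (2:ℕ) ≠ 3),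
        if_pos (hmemlit 2 2 4 (Or.inl rfl)),
        if_neg (hnotmem 3 (by norm_num) 2 4 (by norm_num) (by norm_num) (by norm_num) (by norm_num) (by norm_num) (by norm_num))])
      (by rw [card_inter_pair (by norm_num : (2:ℕ) ≠ 3),
        if_pos (hmemlit 2 2 3 (Or.inl rfl)), if_pos (hmemlit 3 2 3 (Or.inr rfl))])
      (by rw [card_inter_pair (by norm_num : (2:ℕ) ≠ 3),
        if_neg (hnotmem 2 (by norm_num) 1 4 (by norm_num) (by norm_num) (by norm_num) (by norm_num) (by norm_num) (by norm_num)),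
        if_neg (hnotmem 3 (by norm_num) 1 4 (by norm_num) (by norm_num) (by norm_num) (by norm_num) (by norm_num) (by norm_num))])
      (by rw [card_inter_pair (by norm_num : (2:ℕ) ≠ 3),
        if_neg (hnotmem 2 (by norm_num) 1 3 (by norm_num) (by norm_num) (by norm_num) (by norm_num) (by norm_num) (by norm_num)),
        if_pos (hmemlit 3 1 3 (Or.inr rfl))])
  have hW24 : W 2 4 = (m-2)^n1*(m-1)^q*(m-1)^q*m^n4 :=
    W_eval hm2 h 2 1 1 0
      (by rw [card_inter_pair (by norm_num : (2:ℕ) ≠ 4),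
        if_pos (hmemlit 2 2 4 (Or.inl rfl)), if_pos (hmemlit 4 2 4 (Or.inr rfl))])
      (by rw [card_inter_pair (by norm_num : (2:ℕ) ≠ 4),
        if_pos (hmemlit 2 2 3 (Or.inl rfl)),
        if_neg (hnotmem 4 (by norm_num) 2 3 (by norm_num) (by norm_num) (by norm_num) (by norm_num) (by norm_num) (by norm_num))])
      (by rw [card_inter_pair (by norm_num : (2:ℕ) ≠ 4),
        if_neg (hnotmem 2 (by norm_num) 1 4 (by norm_num) (by norm_num) (by norm_num) (by norm_num) (by norm_num) (by norm_num)),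
        if_pos (hmemlit 4 1 4 (Or.inr rfl))])
      (by rw [card_inter_pair (by norm_num : (2:ℕ) ≠ 4),
        if_neg (hnotmem 2 (by norm_num) 1 3 (by norm_num) (by norm_num) (by norm_num) (by norm_num) (by norm_num) (by norm_num)),
        if_neg (hnotmem 4 (by norm_num) 1 3 (by norm_num) (by norm_num) (by norm_num) (by norm_num) (by norm_num) (by norm_num))])
  -- assemble
  rw [K2l_master]
  have hA : Lstar l q n1 m (Sum.inl 0) = Istar m ∪ {1,2} := by simp [Lstar]
  have hB : Lstar l q n1 m (Sum.inl 1) = Istar m ∪ {3,4} := by simp [Lstar]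
  rw [hA, hB, Finset.sum_product]
  have hinner : ∀ ca : ℕ, ∑ cb ∈ Istar m ∪ {3,4},
      (∏ i : Fin l, ((Lstar l q n1 m (Sum.inr i)) \ {ca, cb}).card)
      = (∑ cb ∈ Istar m, W ca cb) + (W ca 3 + W ca 4) := by
    intro ca
    rw [Finset.sum_union (disj_Istar_pair (by norm_num) (by norm_num)),
      Finset.sum_pair (by norm_num : (3:ℕ) ≠ 4)]
  rw [Finset.sum_congr rfl (fun ca _ => hinner ca),
    Finset.sum_union (disj_Istar_pair (by norm_num) (by norm_num)),
    Finset.sum_pair (by norm_num : (1:ℕ) ≠ 2)]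
  -- inner sums over I
  have hIdiag : ∀ ca ∈ Istar m, ∑ cb ∈ Istar m, W ca cb
      = (m-1)^l + (m-2-1) * ((m-2)^n1*(m-2)^q*(m-2)^q*(m-2)^n4) := by
    intro ca hca
    rw [← Finset.add_sum_erase _ _ hca, hW_diag ca hca,
      Finset.sum_congr rfl (fun cb hcb => hW_II ca hca cb (Finset.mem_of_mem_erase hcb)
        (Ne.symm (Finset.ne_of_mem_erase hcb))),
      Finset.sum_const, Finset.card_erase_of_mem hca, Istar_card, smul_eq_mul]
  have h1I : ∑ cb ∈ Istar m, W 1 cb = (m-2) * ((m-1)^n1*(m-1)^q*(m-2)^q*(m-2)^n4) := by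
    rw [Finset.sum_congr rfl (fun cb hcb => hW_1I cb hcb), Finset.sum_const, Istar_card,
      smul_eq_mul]
  have h2I : ∑ cb ∈ Istar m, W 2 cb = (m-2) * ((m-2)^n1*(m-2)^q*(m-1)^q*(m-1)^n4) := by
    rw [Finset.sum_congr rfl (fun cb hcb => hW_2I cb hcb), Finset.sum_const, Istar_card,
      smul_eq_mul]
  have hIrow : ∑ ca ∈ Istar m, ((∑ cb ∈ Istar m, W ca cb) + (W ca 3 + W ca 4))
      = (m-2) * ((m-1)^l + (m-2-1) * ((m-2)^n1*(m-2)^q*(m-2)^q*(m-2)^n4)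
        + ((m-1)^n1*(m-2)^q*(m-1)^q*(m-2)^n4 + (m-2)^n1*(m-1)^q*(m-2)^q*(m-1)^n4)) := by
    rw [Finset.sum_congr rfl (fun ca hca => by
      rw [hIdiag ca hca, hW_I3 ca hca, hW_I4 ca hca]), Finset.sum_const, Istar_card, smul_eq_mul]
  rw [hIrow, h1I, h2I, hW13, hW14, hW23, hW24]
  rw [show m-2-1 = m-3 by omega, ← h]
  ring

lemma ind16 (k : ℕ) : 16*((k:ℝ)+1) ≤ (16/7)^(2*k+4) := by
  induction k with
  | zero => norm_num
  | succ n ih =>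
    have hpos : (0:ℝ) ≤ (16/7)^(2*n+4) := by positivity
    calc 16*(((n+1:ℕ):ℝ)+1) ≤ 2 * (16*((n:ℝ)+1)) := by
          push_cast; nlinarith [Nat.cast_nonneg (α := ℝ) n]
      _ ≤ 2 * (16/7)^(2*n+4) := by nlinarith
      _ ≤ (16/7)^2 * (16/7)^(2*n+4) := by nlinarith
      _ = (16/7)^(2*(n+1)+4) := by rw [← pow_add]; congr 1; omega

set_option maxHeartbeats 1000000 in
lemma P_lt_C (m q n1 n4 l : ℕ) (hm : 3 ≤ m) (hq : 4 ≤ q)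
    (hqln : Real.log (16/7) * ((m:ℝ)-1)^2 ≤ (q:ℝ))
    (hn4 : q ≤ n4) (hn41 : n4 ≤ n1) (hn14 : n1 ≤ n4 + 1)
    (hl : n1 + 2*q + n4 = l) :
    ((m-2)*(m-1)^l + (m-2)*(m-3)*(m-2)^l
      + 2*(m-2)*((m-1)^(n1+q)*(m-2)^(q+n4) + (m-1)^(q+n4)*(m-2)^(n1+q))
      + (m^n1*(m-1)^(2*q)*(m-2)^n4 + (m-2)^n1*(m-1)^(2*q)*m^n4)
      + 2*(m^q*(m-2)^q*(m-1)^(n1+n4)) : ℕ)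
      < m*(m-1)^l + m*(m-1)*(m-2)^l := by
  have hcast1 : ((m-1 : ℕ) : ℝ) = (m:ℝ) - 1 := by
    push_cast [Nat.cast_sub (by omega : 1 ≤ m)]; ring
  have hcast2 : ((m-2 : ℕ) : ℝ) = (m:ℝ) - 2 := by
    push_cast [Nat.cast_sub (by omega : 2 ≤ m)]; ring
  have hcast3 : ((m-3 : ℕ) : ℝ) = (m:ℝ) - 3 := by
    push_cast [Nat.cast_sub (by omega : 3 ≤ m)]; ring
  rw [← Nat.cast_lt (α := ℝ)]
  push_cast [hcast1, hcast2, hcast3]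
  set a : ℝ := (m:ℝ) with ha
  set y : ℝ := a - 1 with hy
  set b : ℝ := a - 2 with hb
  have ham : (3:ℝ) ≤ a := by rw [ha]; exact_mod_cast hm
  have hy2 : (2:ℝ) ≤ y := by rw [hy]; linarith
  have hb1 : (1:ℝ) ≤ b := by rw [hb]; linarith
  have hy0 : (0:ℝ) < y := by linarith
  have hb0 : (0:ℝ) < b := by linarith
  have ha0 : (0:ℝ) < a := by linarith
  have hby : b ≤ y := by rw [hb, hy]; linarith
  have hlogc : (0:ℝ) < Real.log (16/7) := Real.log_pos (by norm_num)
  -- L1 : 16 * b * b^(2q) ≤ y^(2q)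
  have L1 : 16 * b * b^(2*q) ≤ y^(2*q) := by
    have h1m : (1 - 1/y) ≤ Real.exp (-(1/y)) := by
      have := Real.add_one_le_exp (-(1/y)); linarith
    have h1m0 : (0:ℝ) ≤ 1 - 1/y := by
      have : 1/y ≤ 1/2 := by rw [div_le_div_iff₀ hy0 (by norm_num)]; linarith
      linarith
    have hbyy : b = y * (1 - 1/y) := by field_simp; rw [hb, hy]; ring
    have hpow : b^(2*q) ≤ y^(2*q) * Real.exp (-((2*q:ℕ))/y) := by
      calc b^(2*q) = y^(2*q) * (1-1/y)^(2*q) := by rw [hbyy, mul_pow]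
        _ ≤ y^(2*q) * Real.exp (-(1/y))^(2*q) := by
            apply mul_le_mul_of_nonneg_left (pow_le_pow_left₀ h1m0 h1m _) (by positivity)
        _ = y^(2*q) * Real.exp (-((2*q:ℕ))/y) := by
            rw [← Real.exp_nat_mul]
            congr 1
            push_cast
            ring
    have hqy : Real.exp (-((2*q:ℕ))/y) ≤ Real.exp (-(2 * Real.log (16/7) * y)) := by
      apply Real.exp_le_exp.2
      rw [neg_div, neg_le_neg_iff, le_div_iff₀ hy0]
      have h1 : Real.log (16/7) * y^2 ≤ q := hqln
      push_cast
      nlinarith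
    have hexp : Real.exp (-(2 * Real.log (16/7) * y)) ≤ (7/16)^(2*(m-1)) := by
      have hyval : y = ((m-1 : ℕ) : ℝ) := by rw [hcast1]
      have heq : Real.exp (-(2 * Real.log (16/7) * y)) = Real.exp (Real.log (7/16))^(2*(m-1)) := by
        rw [← Real.exp_nat_mul]
        congr 1
        rw [show Real.log (7/16) = - Real.log (16/7) by
          rw [show (7/16 : ℝ) = (16/7)⁻¹ by norm_num, Real.log_inv]]
        rw [hyval, hcast1]
        push_cast [Nat.cast_sub (by omega : 1 ≤ m)]
        ring
      rw [heq, Real.exp_log (by norm_num)]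
    have h16 : 16 * b ≤ (16/7)^(2*(m-1)) := by
      have hmain := ind16 (m-3)
      have he1 : ((m-3 : ℕ):ℝ) + 1 = b := by rw [hcast3, hb, ha]; ring
      have he2 : 2*(m-3)+4 = 2*(m-1) := by omega
      rw [he2] at hmain
      calc 16 * b = 16*(((m-3 : ℕ):ℝ) + 1) := by rw [he1]
        _ ≤ (16/7)^(2*(m-1)) := hmain
    calc 16 * b * b^(2*q) ≤ 16 * b * (y^(2*q) * Real.exp (-((2*q:ℕ))/y)) := by
          apply mul_le_mul_of_nonneg_left hpow (by positivity)
      _ ≤ 16 * b * (y^(2*q) * (7/16)^(2*(m-1))) := by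
          apply mul_le_mul_of_nonneg_left _ (by positivity)
          apply mul_le_mul_of_nonneg_left _ (by positivity)
          exact le_trans hqy hexp
      _ = (16 * b * (7/16)^(2*(m-1))) * y^(2*q) := by ring
      _ ≤ 1 * y^(2*q) := by
          apply mul_le_mul_of_nonneg_right _ (by positivity)
          have hpos : (0:ℝ) < (16/7)^(2*(m-1)) := by positivity
          have hinv : (7/16 : ℝ)^(2*(m-1)) = ((16/7)^(2*(m-1)))⁻¹ := by
            rw [← inv_pow]; norm_num
          rw [hinv, mul_inv_le_iff₀ hpos, one_mul]
          exact h16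
      _ = y^(2*q) := one_mul _
  -- L2 : (a*b)^q < (7/16) * y^(2*q)
  have L2 : (a*b)^q < (7/16) * y^(2*q) := by
    have hy20 : (0:ℝ) < y^2 := by positivity
    have hab : a * b = y^2 * (1 - 1/y^2) := by field_simp; rw [ha, hy]; ring
    have h10 : (0:ℝ) ≤ 1 - 1/y^2 := by
      have : 1/y^2 ≤ 1/4 := by rw [div_le_div_iff₀ hy20 (by norm_num)]; nlinarith
      linarith
    have hstrict : (1 - 1/y^2) < Real.exp (-(1/y^2)) := by
      have hne : -(1/y^2) ≠ 0 := by
        simp only [ne_eq, neg_eq_zero, div_eq_zero_iff]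
        push_neg
        constructor <;> intro h <;> [skip; nlinarith]
        · norm_num at h
      have := Real.add_one_lt_exp hne
      linarith
    have hqq : q ≠ 0 := by omega
    have hstep : (1 - 1/y^2)^q < Real.exp (-(1/y^2))^q :=
      pow_lt_pow_left₀ hstrict h10 hqq
    have hexpq : Real.exp (-(1/y^2))^q = Real.exp (-((q:ℝ)/y^2)) := by
      rw [← Real.exp_nat_mul]
      congr 1
      ring
    have hfin : Real.exp (-((q:ℝ)/y^2)) ≤ 7/16 := by
      have h1 : Real.log (16/7) ≤ (q:ℝ)/y^2 := by
        rw [le_div_iff₀ hy20]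
        linarith [hqln]
      calc Real.exp (-((q:ℝ)/y^2)) ≤ Real.exp (-(Real.log (16/7))) :=
            Real.exp_le_exp.2 (by linarith)
        _ = 7/16 := by
            rw [show -Real.log (16/7) = Real.log (7/16) by
              rw [show (7/16 : ℝ) = (16/7)⁻¹ by norm_num, Real.log_inv]]
            exact Real.exp_log (by norm_num)
    calc (a*b)^q = (y^2)^q * (1-1/y^2)^q := by rw [hab, mul_pow]
      _ < (y^2)^q * (7/16) := by
          apply mul_lt_mul_of_pos_left _ (by positivity)
          calc (1-1/y^2)^q < Real.exp (-(1/y^2))^q := hstep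
            _ = Real.exp (-((q:ℝ)/y^2)) := hexpq
            _ ≤ 7/16 := hfin
      _ = (7/16) * y^(2*q) := by rw [pow_mul]; ring
  -- (A)
  have hA : 2*b*(y^(n1+q)*b^(q+n4) + y^(q+n4)*b^(n1+q)) ≤ (1/4) * y^l := by
    have hexp1 : y^(n1+q) * y^(n4-q) = y^(n1+n4) := by
      rw [← pow_add]; congr 1; omega
    have hexp2 : y^(q+n4) * y^(n1-q) = y^(n1+n4) := by
      rw [← pow_add]; congr 1; omega
    have hbexp1 : b^(q+n4) = b^(2*q) * b^(n4-q) := by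
      rw [← pow_add]; congr 1; omega
    have hbexp2 : b^(n1+q) = b^(2*q) * b^(n1-q) := by
      rw [← pow_add]; congr 1; omega
    have hs1 : y^(n1+q)*b^(q+n4) ≤ b^(2*q) * y^(n1+n4) := by
      calc y^(n1+q)*b^(q+n4) = y^(n1+q) * (b^(2*q) * b^(n4-q)) := by rw [hbexp1]
        _ ≤ y^(n1+q) * (b^(2*q) * y^(n4-q)) := by
            apply mul_le_mul_of_nonneg_left _ (by positivity)
            apply mul_le_mul_of_nonneg_left (pow_le_pow_left₀ hb0.le hby _) (by positivity)
        _ = b^(2*q) * (y^(n1+q) * y^(n4-q)) := by ring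
        _ = b^(2*q) * y^(n1+n4) := by rw [hexp1]
    have hs2 : y^(q+n4)*b^(n1+q) ≤ b^(2*q) * y^(n1+n4) := by
      calc y^(q+n4)*b^(n1+q) = y^(q+n4) * (b^(2*q) * b^(n1-q)) := by rw [hbexp2]
        _ ≤ y^(q+n4) * (b^(2*q) * y^(n1-q)) := by
            apply mul_le_mul_of_nonneg_left _ (by positivity)
            apply mul_le_mul_of_nonneg_left (pow_le_pow_left₀ hb0.le hby _) (by positivity)
        _ = b^(2*q) * (y^(q+n4) * y^(n1-q)) := by ring
        _ = b^(2*q) * y^(n1+n4) := by rw [hexp2]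
    have hyl : y^l = y^(2*q) * y^(n1+n4) := by rw [← pow_add]; congr 1; omega
    calc 2*b*(y^(n1+q)*b^(q+n4) + y^(q+n4)*b^(n1+q))
        ≤ 2*b*(b^(2*q) * y^(n1+n4) + b^(2*q) * y^(n1+n4)) := by
          apply mul_le_mul_of_nonneg_left (add_le_add hs1 hs2) (by positivity)
      _ = (1/4) * ((16 * b * b^(2*q)) * y^(n1+n4)) := by ring
      _ ≤ (1/4) * (y^(2*q) * y^(n1+n4)) := by
          apply mul_le_mul_of_nonneg_left _ (by norm_num)
          apply mul_le_mul_of_nonneg_right L1 (by positivity)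
      _ = (1/4) * y^l := by rw [hyl]
  -- common: (a*b)^n4 * y^(2*q) ≤ (a*b)^q * y^(2*n4)
  have hab0 : (0:ℝ) ≤ a*b := by positivity
  have haby : a*b ≤ y^2 := by rw [ha, hy]; nlinarith
  have hcommon : (a*b)^n4 * y^(2*q) ≤ (a*b)^q * y^(2*n4) := by
    calc (a*b)^n4 * y^(2*q) = (a*b)^q * (a*b)^(n4-q) * y^(2*q) := by
          rw [← pow_add]; congr 2; omega
      _ ≤ (a*b)^q * (y^2)^(n4-q) * y^(2*q) := by
          apply mul_le_mul_of_nonneg_right _ (by positivity)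
          apply mul_le_mul_of_nonneg_left (pow_le_pow_left₀ hab0 haby _) (by positivity)
      _ = (a*b)^q * y^(2*n4) := by
          rw [← pow_mul, mul_assoc, ← pow_add]
          congr 2
          omega
  -- (B)
  have hB : (a^n1*y^(2*q)*b^n4 + b^n1*y^(2*q)*a^n4) + 2*(a^q*b^q*y^(n1+n4))
      < (7/4) * y^l := by
    have habq : a^q * b^q = (a*b)^q := (mul_pow a b q).symm
    rcases (by omega : n1 = n4 ∨ n1 = n4 + 1) with hc | hc
    · rw [hc]
      have hyl : y^l = y^(2*q) * y^(2*n4) := by rw [← pow_add]; congr 1; omega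
      have hmid : a^n4*y^(2*q)*b^n4 = (a*b)^n4 * y^(2*q) := by rw [mul_pow]; ring
      have hmid2 : b^n4*y^(2*q)*a^n4 = (a*b)^n4 * y^(2*q) := by rw [mul_pow]; ring
      have hyn : y^(n4+n4) = y^(2*n4) := by congr 1; omega
      calc (a^n4*y^(2*q)*b^n4 + b^n4*y^(2*q)*a^n4) + 2*(a^q*b^q*y^(n4+n4))
          = 2*((a*b)^n4 * y^(2*q)) + 2*((a*b)^q * y^(2*n4)) := by
            rw [hmid, hmid2, habq, hyn]; ring
        _ ≤ 2*((a*b)^q * y^(2*n4)) + 2*((a*b)^q * y^(2*n4)) := by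
            have := hcommon
            nlinarith [pow_nonneg hab0 q, pow_nonneg hy0.le (2*n4)]
        _ = 4 * ((a*b)^q * y^(2*n4)) := by ring
        _ < 4 * (((7/16) * y^(2*q)) * y^(2*n4)) := by
            apply mul_lt_mul_of_pos_left _ (by norm_num)
            apply mul_lt_mul_of_pos_right L2 (by positivity)
        _ = (7/4) * y^l := by rw [hyl]; ring
    · rw [hc]
      have hyl : y^l = y^(2*q) * y^(2*n4) * y := by
        calc y^l = y^(2*q+2*n4+1) := by congr 1; omega
          _ = y^(2*q) * y^(2*n4) * y := by rw [pow_succ, pow_add]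
      have hmid : a^(n4+1)*y^(2*q)*b^n4 + b^(n4+1)*y^(2*q)*a^n4
          = (a*b)^n4 * y^(2*q) * (a + b) := by
        rw [mul_pow, pow_succ, pow_succ]; ring
      have hab2y : a + b = 2*y := by rw [ha, hy, hb]; ring
      have hyn : y^(n4+1+n4) = y^(2*n4) * y := by
        calc y^(n4+1+n4) = y^(2*n4+1) := by congr 1; omega
          _ = y^(2*n4) * y := pow_succ y _
      calc (a^(n4+1)*y^(2*q)*b^n4 + b^(n4+1)*y^(2*q)*a^n4) + 2*(a^q*b^q*y^(n4+1+n4))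
          = 2*((a*b)^n4 * y^(2*q)) * y + 2*((a*b)^q * y^(2*n4)) * y := by
            rw [hmid, hab2y, habq, hyn]; ring
        _ ≤ 2*((a*b)^q * y^(2*n4)) * y + 2*((a*b)^q * y^(2*n4)) * y := by
            have := hcommon
            nlinarith [pow_nonneg hab0 q, pow_nonneg hy0.le (2*n4)]
        _ = 4 * ((a*b)^q * y^(2*n4)) * y := by ring
        _ < 4 * (((7/16) * y^(2*q)) * y^(2*n4)) * y := by
            apply mul_lt_mul_of_pos_right _ hy0
            apply mul_lt_mul_of_pos_left _ (by norm_num)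
            apply mul_lt_mul_of_pos_right L2 (by positivity)
        _ = (7/4) * y^l := by rw [hyl]; ring
  -- final assembly
  have hbl0 : (0:ℝ) ≤ b^l := by positivity
  have hyl0 : (0:ℝ) < y^l := by positivity
  have hcoef : b*(a-3) ≤ a*y := by rw [hb, hy]; nlinarith
  have h1 : b*(a-3)*b^l ≤ a*y*b^l := mul_le_mul_of_nonneg_right hcoef hbl0
  have h2 : b*y^l + 2*y^l = a*y^l := by rw [hb]; ring
  have h3 : 2 * b * (y ^ (n1 + q) * b ^ (q + n4) + y ^ (q + n4) * b ^ (n1 + q)) +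
      ((a ^ n1 * y ^ (2 * q) * b ^ n4 + b ^ n1 * y ^ (2 * q) * a ^ n4) +
        2 * (a ^ q * b ^ q * y ^ (n1 + n4))) < 2 * y ^ l := by
    have h4 := add_lt_add_of_le_of_lt hA hB
    have h5 : 1/4 * y^l + 7/4 * y^l = 2*y^l := by ring
    rw [h5] at h4
    convert h4 using 2
  linarith [h3, h1, h2]


lemma lcf_eq (l m : ℕ) (hl1 : 1 ≤ l) (hm : l + 3 ≤ m) :
    listColorFunction (K2l l) m = chromPoly (K2l l) m := by
  apply le_antisymm
  · apply Nat.sInf_le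
    show ∃ L, IsAssignment L m ∧ numListColorings (K2l l) L = chromPoly (K2l l) m
    exact ⟨fun _ => Finset.Icc 1 m, fun v => by simp [IsAssignment], rfl⟩
  · apply le_csInf ⟨chromPoly (K2l l) m,
      show ∃ L, IsAssignment L m ∧ numListColorings (K2l l) L = chromPoly (K2l l) m from
        ⟨fun _ => Finset.Icc 1 m, fun v => by simp [IsAssignment], rfl⟩⟩
    rintro p ⟨L, hLa, rfl⟩
    rw [K2l_master, chromPoly_K2l]
    exact P_ge l m hl1 hm _ _ _ (hLa _) (hLa _) (fun i => hLa _)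

lemma chromNum_le (l : ℕ) (hl1 : 1 ≤ l) : chromNum (K2l l) ≤ 2 := by
  apply Nat.sInf_le
  show 0 < chromPoly (K2l l) 2
  rw [chromPoly_K2l]
  norm_num [Nat.sub_self, zero_pow (by omega : l ≠ 0)]

/-- For every integer `l ≥ 16`, with `q = ⌊l/4⌋`, we have
`τ(K_{2,l}) > ⌊(q / ln(16/7))^{1/2} + 1⌋`. -/
theorem lcfThreshold_K2l_lower_bound (l : ℕ) (hl : 16 ≤ l) :
    ⌊Real.sqrt ((l / 4 : ℕ) / Real.log (16 / 7)) + 1⌋ < (lcfThreshold (K2l l) : ℤ) := by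
  have hl1 : 1 ≤ l := by omega
  set q : ℕ := l / 4 with hqdef
  have hq4 : 4 ≤ q := by omega
  have hmod := Nat.div_add_mod l 4
  have hql : 4*q ≤ l ∧ l ≤ 4*q + 3 := by omega
  have hlogc : (0:ℝ) < Real.log (16/7) := Real.log_pos (by norm_num)
  have hlogc1 : Real.log (16/7) ≤ 1 := by
    have h1 : (16/7 : ℝ) < Real.exp 1 := by
      have := Real.exp_one_gt_d9
      nlinarith
    have := Real.log_lt_log (by norm_num : (0:ℝ) < 16/7) h1
    rw [Real.log_exp] at this
    linarith
  set x : ℝ := Real.sqrt ((q:ℝ) / Real.log (16/7)) with hx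
  have harg0 : (0:ℝ) ≤ (q:ℝ) / Real.log (16/7) := by positivity
  have hx0 : 0 ≤ x := Real.sqrt_nonneg _
  have hx2 : 2 ≤ x := by
    have h4 : (4:ℝ) ≤ (q:ℝ)/Real.log (16/7) := by
      rw [le_div_iff₀ hlogc]
      have hq4' : (4:ℝ) ≤ (q:ℝ) := by exact_mod_cast hq4
      nlinarith
    calc (2:ℝ) = Real.sqrt 4 := by
          rw [show (4:ℝ) = 2^2 by norm_num, Real.sqrt_sq (by norm_num : (0:ℝ) ≤ 2)]
      _ ≤ x := Real.sqrt_le_sqrt h4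
  set z : ℤ := ⌊x + 1⌋ with hz
  have hz3 : 3 ≤ z := by
    rw [hz]
    apply Int.le_floor.2
    push_cast
    linarith
  set M : ℕ := z.toNat with hM
  have hMz : (M:ℤ) = z := Int.toNat_of_nonneg (by omega)
  have hM3 : 3 ≤ M := by omega
  have hMx : (M:ℝ) ≤ x + 1 := by
    have h1 : ((M:ℤ):ℝ) = (M:ℝ) := by push_cast; rfl
    have h2 := Int.floor_le (x + 1)
    rw [← hz] at h2
    calc (M:ℝ) = ((M:ℤ):ℝ) := by push_cast; rfl
      _ = (z:ℝ) := by rw [hMz]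
      _ ≤ x + 1 := h2
  have hqln : Real.log (16/7) * ((M:ℝ)-1)^2 ≤ (q:ℝ) := by
    have h1 : (M:ℝ) - 1 ≤ x := by linarith
    have h0 : (0:ℝ) ≤ (M:ℝ) - 1 := by
      have h3 : (3:ℝ) ≤ (M:ℝ) := by exact_mod_cast hM3
      linarith
    have h2 : ((M:ℝ)-1)^2 ≤ x^2 := pow_le_pow_left₀ h0 h1 2
    have h3 : x^2 = (q:ℝ) / Real.log (16/7) := Real.sq_sqrt harg0
    rw [h3] at h2
    calc Real.log (16/7) * ((M:ℝ)-1)^2 ≤ Real.log (16/7) * ((q:ℝ) / Real.log (16/7)) := by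
          apply mul_le_mul_of_nonneg_left h2 hlogc.le
      _ = (q:ℝ) := by field_simp
  -- construction parameters
  set eps : ℕ := l - 4*q with heps
  set n4 : ℕ := q + eps/2 with hn4def
  set n1 : ℕ := q + eps - eps/2 with hn1def
  have hparams : q ≤ n4 ∧ n4 ≤ n1 ∧ n1 ≤ n4 + 1 ∧ n1 + 2*q + n4 = l := by omega
  -- strict inequality at M
  have hlt : numListColorings (K2l l) (Lstar l q n1 M) < chromPoly (K2l l) M := by
    rw [P_eval l q n1 n4 M hM3 hparams.2.2.2, chromPoly_K2l]
    exact P_lt_C M q n1 n4 l hM3 hq4 hqln hparams.1 hparams.2.1 hparams.2.2.1 hparams.2.2.2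
  have hassign : IsAssignment (Lstar l q n1 M) M := by
    intro v
    rcases v with j | i
    · show (if j = 0 then Istar M ∪ {1, 2} else Istar M ∪ {3, 4}).card = M
      split_ifs
      · exact Istar_union_pair_card (by omega) (by norm_num) (by norm_num) (by norm_num)
      · exact Istar_union_pair_card (by omega) (by norm_num) (by norm_num) (by norm_num)
    · exact Lstar_inr_card (by omega) _
  have hlcf_le : listColorFunction (K2l l) M ≤ numListColorings (K2l l) (Lstar l q n1 M) :=
    Nat.sInf_le ⟨Lstar l q n1 M, hassign, rfl⟩
  have hlcf_lt : listColorFunction (K2l l) M < chromPoly (K2l l) M :=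
    lt_of_le_of_lt hlcf_le hlt
  -- membership of l+3 in threshold set
  have hS : (l+3) ∈ {k | chromNum (K2l l) ≤ k ∧
      ∀ m, k ≤ m → listColorFunction (K2l l) m = chromPoly (K2l l) m} := by
    constructor
    · exact le_trans (chromNum_le l hl1) (by omega)
    · intro m hm
      exact lcf_eq l m hl1 hm
  -- conclude
  by_contra hcon
  push_neg at hcon
  have hτM : lcfThreshold (K2l l) ≤ M := by
    have : (lcfThreshold (K2l l) : ℤ) ≤ (M:ℤ) := by rw [hMz]; exact hcon
    exact_mod_cast this
  have hτmem := Nat.sInf_mem (⟨l+3, hS⟩ :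
    Set.Nonempty {k | chromNum (K2l l) ≤ k ∧
      ∀ m, k ≤ m → listColorFunction (K2l l) m = chromPoly (K2l l) m})
  have heq := hτmem.2 M hτM
  omega
end

section
/- Let m, t ∈ ℕ with m ≥ 3, and let G = K_{2,4t} with bipartition {x_1, x_2}, {y_1, …, y_{4t}}. Define the m-assignment L for G by L(x_1) = [m−2] ∪ {m−1, m}, L(x_2) = [m−2] ∪ {m+1, m+2}, and: L(y_j) = [m−2] ∪ {m−1, m+1} for 1 ≤ j ≤ t, L(y_j) = [m−2] ∪ {m−1, m+2} for t+1 ≤ j ≤ 2t, L(y_j) = [m−2] ∪ {m, m+1} for 2t+1 ≤ j ≤ 3t, and L(y_j) = [m−2] ∪ {m, m+2} for 3t+1 ≤ j ≤ 4t. Then P(G, L) = (m−2)(m−1)^{4t} + (m−3)(m−2)^{4t+1} + 4(m−2)^{2t+1}(m−1)^{2t} + 4(m−2)^t (m−1)^{2t} m^t. -/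
section CCCaux
open Finset

lemma CCCcardA1 {S : Finset ℕ} {a b : ℕ} (ha : a ∈ S) (hb : b ∈ S) (hab : a ≠ b) :
    (S \ {a, b}).card = S.card - 2 := by
  rw [Finset.card_sdiff_of_subset (by intro x hx; simp at hx; rcases hx with rfl | rfl <;> assumption)]
  congr 1
  rw [Finset.card_insert_of_notMem (by simp [hab]), Finset.card_singleton]

lemma CCCcardA5 {S : Finset ℕ} {a : ℕ} (ha : a ∈ S) :
    (S \ {a, a}).card = S.card - 1 := by
  rw [Finset.pair_eq_singleton, Finset.card_sdiff_of_subset (by simpa), Finset.card_singleton]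

lemma CCCcardA2 {S : Finset ℕ} {a b : ℕ} (ha : a ∈ S) (hb : b ∉ S) :
    (S \ {a, b}).card = S.card - 1 := by
  have h : S \ {a, b} = S \ {a} := by
    ext x
    simp only [Finset.mem_sdiff, Finset.mem_insert, Finset.mem_singleton]
    constructor
    · rintro ⟨h1, h2⟩; exact ⟨h1, fun h => h2 (Or.inl h)⟩
    · rintro ⟨h1, h2⟩
      refine ⟨h1, ?_⟩
      rintro (rfl | rfl)
      · exact h2 rfl
      · exact hb h1
  rw [h, Finset.card_sdiff_of_subset (by simpa), Finset.card_singleton]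

lemma CCCcardA3 {S : Finset ℕ} {a b : ℕ} (ha : a ∉ S) (hb : b ∈ S) :
    (S \ {a, b}).card = S.card - 1 := by
  have h : S \ {a, b} = S \ {b} := by
    ext x
    simp only [Finset.mem_sdiff, Finset.mem_insert, Finset.mem_singleton]
    constructor
    · rintro ⟨h1, h2⟩; exact ⟨h1, fun h => h2 (Or.inr h)⟩
    · rintro ⟨h1, h2⟩
      refine ⟨h1, ?_⟩
      rintro (rfl | rfl)
      · exact ha h1
      · exact h2 rfl
  rw [h, Finset.card_sdiff_of_subset (by simpa), Finset.card_singleton]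

lemma CCCcardA4 {S : Finset ℕ} {a b : ℕ} (ha : a ∉ S) (hb : b ∉ S) :
    (S \ {a, b}).card = S.card := by
  have hd : Disjoint S ({a, b} : Finset ℕ) := by
    rw [Finset.disjoint_right]
    intro x hx
    simp only [Finset.mem_insert, Finset.mem_singleton] at hx
    rcases hx with rfl | rfl <;> assumption
  rw [hd.sdiff_eq_left]

lemma CCClist_card (m p q : ℕ) (hm : 3 ≤ m) (hp : m - 2 < p) (hq : m - 2 < q) (hpq : p ≠ q) :
    (Finset.Icc 1 (m - 2) ∪ {p, q}).card = m := by
  rw [Finset.card_union_of_disjoint, Nat.card_Icc,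
    Finset.card_insert_of_notMem (by simp [hpq]), Finset.card_singleton]
  · omega
  · rw [Finset.disjoint_left]
    intro x hx
    simp only [Finset.mem_Icc] at hx
    simp only [Finset.mem_insert, Finset.mem_singleton]
    omega

lemma CCCprod_four_blocks (t : ℕ) (c : Fin (4 * t) → ℕ) (c1 c2 c3 c4 : ℕ)
    (h1 : ∀ j : Fin (4 * t), j.val < t → c j = c1)
    (h2 : ∀ j : Fin (4 * t), t ≤ j.val → j.val < 2 * t → c j = c2)
    (h3 : ∀ j : Fin (4 * t), 2 * t ≤ j.val → j.val < 3 * t → c j = c3)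
    (h4 : ∀ j : Fin (4 * t), 3 * t ≤ j.val → c j = c4) :
    ∏ j : Fin (4 * t), c j = c1 ^ t * c2 ^ t * c3 ^ t * c4 ^ t := by
  set f : ℕ → ℕ := fun i => if h : i < 4 * t then c ⟨i, h⟩ else 1 with hf
  have step : ∏ j : Fin (4 * t), c j = ∏ i ∈ Finset.range (4 * t), f i := by
    rw [← Fin.prod_univ_eq_prod_range]
    refine Finset.prod_congr rfl fun j _ => ?_
    simp [hf, j.isLt]
  rw [step, show 4 * t = t + (t + (t + t)) by ring, Finset.prod_range_add,
    Finset.prod_range_add, Finset.prod_range_add]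
  have e1 : ∀ i ∈ Finset.range t, f i = c1 := by
    intro i hi
    simp only [Finset.mem_range] at hi
    have h : i < 4 * t := by omega
    rw [hf]; simp only [h, dif_pos]
    exact h1 _ hi
  have e2 : ∀ i ∈ Finset.range t, f (t + i) = c2 := by
    intro i hi
    simp only [Finset.mem_range] at hi
    have h : t + i < 4 * t := by omega
    rw [hf]; simp only [h, dif_pos]
    exact h2 ⟨t + i, h⟩ (by show t ≤ t + i; omega) (by show t + i < 2 * t; omega)
  have e3 : ∀ i ∈ Finset.range t, f (t + (t + i)) = c3 := by
    intro i hi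
    simp only [Finset.mem_range] at hi
    have h : t + (t + i) < 4 * t := by omega
    rw [hf]; simp only [h, dif_pos]
    exact h3 ⟨t + (t + i), h⟩ (by show 2 * t ≤ t + (t + i); omega)
      (by show t + (t + i) < 3 * t; omega)
  have e4 : ∀ i ∈ Finset.range t, f (t + (t + (t + i))) = c4 := by
    intro i hi
    simp only [Finset.mem_range] at hi
    have h : t + (t + (t + i)) < 4 * t := by omega
    rw [hf]; simp only [h, dif_pos]
    exact h4 ⟨t + (t + (t + i)), h⟩ (by show 3 * t ≤ t + (t + (t + i)); omega)
  rw [Finset.prod_congr rfl e1, Finset.prod_congr rfl e2, Finset.prod_congr rfl e3,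
    Finset.prod_congr rfl e4, Finset.prod_const, Finset.prod_const, Finset.prod_const,
    Finset.prod_const, Finset.card_range]
  ring

lemma CCCkey (l : ℕ) (L : Fin 2 ⊕ Fin l → Finset ℕ) :
    numListColorings (K2l l) L =
      ∑ a ∈ L (Sum.inl 0), ∑ b ∈ L (Sum.inl 1),
        ∏ j : Fin l, ((L (Sum.inr j)) \ {a, b}).card := by
  classical
  set e : ℕ × ℕ × (Fin l → ℕ) → (Fin 2 ⊕ Fin l → ℕ) :=
    fun p => Sum.elim (fun i => if i = 0 then p.1 else p.2.1) p.2.2 with he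
  set T : Finset (ℕ × ℕ × (Fin l → ℕ)) :=
    ((L (Sum.inl 0)) ×ˢ ((L (Sum.inl 1)) ×ˢ Fintype.piFinset (fun j => L (Sum.inr j)))).filter
      (fun p => ∀ j, p.2.2 j ≠ p.1 ∧ p.2.2 j ≠ p.2.1) with hT
  have hinj : Set.InjOn e ↑T := by
    intro p _ q _ h
    have h0 := congrFun h (Sum.inl 0)
    have h1 := congrFun h (Sum.inl 1)
    have h2 : ∀ j, p.2.2 j = q.2.2 j := fun j => congrFun h (Sum.inr j)
    simp [he] at h0 h1
    exact Prod.ext h0 (Prod.ext h1 (funext h2))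
  have hproper : ∀ f, IsProperListColoring (K2l l) L f ↔
      ((∀ v, f v ∈ L v) ∧ ∀ (i : Fin 2) (j : Fin l), f (Sum.inl i) ≠ f (Sum.inr j)) := by
    intro f
    constructor
    · rintro ⟨h1, h2⟩
      exact ⟨h1, fun i j => h2 (by simp [K2l])⟩
    · rintro ⟨h1, h2⟩
      refine ⟨h1, ?_⟩
      rintro u w hadj
      rcases u with i | j <;> rcases w with i' | j' <;> simp [K2l] at hadj
      · exact h2 i j'
      · exact (h2 i' j).symm
  have hset : {f | IsProperListColoring (K2l l) L f} = ↑(T.image e) := by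
    ext f
    simp only [Set.mem_setOf_eq, coe_image, Set.mem_image, mem_coe, hproper]
    constructor
    · rintro ⟨h1, h2⟩
      refine ⟨(f (Sum.inl 0), f (Sum.inl 1), fun j => f (Sum.inr j)), ?_, ?_⟩
      · simp only [hT, mem_filter, mem_product, Fintype.mem_piFinset]
        exact ⟨⟨h1 _, h1 _, fun j => h1 _⟩, fun j => ⟨(h2 0 j).symm, (h2 1 j).symm⟩⟩
      · funext x
        rcases x with i | j
        · fin_cases i <;> simp [he]
        · simp [he]
    · rintro ⟨p, hp, rfl⟩
      simp only [hT, mem_filter, mem_product, Fintype.mem_piFinset] at hp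
      obtain ⟨⟨m0, m1, mj⟩, hne⟩ := hp
      constructor
      · rintro (i | j)
        · fin_cases i <;> simpa [he]
        · simpa [he] using mj j
      · intro i j
        fin_cases i
        · simpa [he] using (hne j).1.symm
        · simpa [he] using (hne j).2.symm
  have hcard : numListColorings (K2l l) L = T.card := by
    rw [numListColorings, hset, Set.ncard_coe_finset, Finset.card_image_of_injOn hinj]
  rw [hcard, hT, Finset.card_filter, Finset.sum_product]
  refine Finset.sum_congr rfl fun a ha => ?_
  rw [Finset.sum_product]
  refine Finset.sum_congr rfl fun b hb => ?_
  have hfil : (Fintype.piFinset (fun j => L (Sum.inr j))).filter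
      (fun g => ∀ j, g j ≠ a ∧ g j ≠ b) =
      Fintype.piFinset (fun j => (L (Sum.inr j)).filter (fun c => c ≠ a ∧ c ≠ b)) := by
    ext g
    simp [Fintype.mem_piFinset, forall_and]
  calc (∑ g ∈ Fintype.piFinset (fun j => L (Sum.inr j)),
        if ∀ j, g j ≠ a ∧ g j ≠ b then 1 else 0)
      = ((Fintype.piFinset (fun j => L (Sum.inr j))).filter
          (fun g => ∀ j, g j ≠ a ∧ g j ≠ b)).card := by rw [Finset.card_filter]
    _ = ∏ j : Fin l, ((L (Sum.inr j)).filter (fun c => c ≠ a ∧ c ≠ b)).card := by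
          rw [hfil, Fintype.card_piFinset]
    _ = ∏ j : Fin l, ((L (Sum.inr j)) \ {a, b}).card := by
          refine Finset.prod_congr rfl fun j _ => ?_
          congr 1
          rw [Finset.sdiff_eq_filter]
          refine Finset.filter_congr fun c _ => ?_
          simp [not_or]

end CCCaux

open Finset in
/-- For `m ≥ 3`, `t ≥ 1`, and the specific `m`-assignment `L` for `G = K_{2,4t}` with
`L(x_1) = [m-2] ∪ {m-1, m}`, `L(x_2) = [m-2] ∪ {m+1, m+2}`, and the `y`-vertices split
into four blocks of size `t` receiving the lists `[m-2] ∪ {m-1, m+1}`,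
`[m-2] ∪ {m-1, m+2}`, `[m-2] ∪ {m, m+1}`, `[m-2] ∪ {m, m+2}` respectively, we have
`P(G,L) = (m-2)(m-1)^{4t} + (m-3)(m-2)^{4t+1} + 4(m-2)^{2t+1}(m-1)^{2t}
  + 4(m-2)^t(m-1)^{2t}m^t`.
(Vertices `y_j` are indexed here by `j : Fin (4t)`, i.e. zero-based, so the paper's
blocks `1 ≤ j ≤ t`, `t+1 ≤ j ≤ 2t`, … become `j < t`, `t ≤ j < 2t`, ….) -/
theorem numListColorings_K2_4t_assignment (m t : ℕ) (hm : 3 ≤ m) (ht : 1 ≤ t)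
    (L : Fin 2 ⊕ Fin (4 * t) → Finset ℕ)
    (hx1 : L (Sum.inl 0) = Finset.Icc 1 (m - 2) ∪ {m - 1, m})
    (hx2 : L (Sum.inl 1) = Finset.Icc 1 (m - 2) ∪ {m + 1, m + 2})
    (hy1 : ∀ j : Fin (4 * t), j.val < t →
      L (Sum.inr j) = Finset.Icc 1 (m - 2) ∪ {m - 1, m + 1})
    (hy2 : ∀ j : Fin (4 * t), t ≤ j.val → j.val < 2 * t →
      L (Sum.inr j) = Finset.Icc 1 (m - 2) ∪ {m - 1, m + 2})
    (hy3 : ∀ j : Fin (4 * t), 2 * t ≤ j.val → j.val < 3 * t →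
      L (Sum.inr j) = Finset.Icc 1 (m - 2) ∪ {m, m + 1})
    (hy4 : ∀ j : Fin (4 * t), 3 * t ≤ j.val →
      L (Sum.inr j) = Finset.Icc 1 (m - 2) ∪ {m, m + 2}) :
    numListColorings (K2l (4 * t)) L =
      (m - 2) * (m - 1) ^ (4 * t) + (m - 3) * (m - 2) ^ (4 * t + 1) +
        4 * (m - 2) ^ (2 * t + 1) * (m - 1) ^ (2 * t) +
        4 * (m - 2) ^ t * (m - 1) ^ (2 * t) * m ^ t := by
  classical
  have hB : (Finset.Icc 1 (m - 2)).card = m - 2 := by rw [Nat.card_Icc]; omega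
  have hl1 : (Finset.Icc 1 (m - 2) ∪ ({m - 1, m + 1} : Finset ℕ)).card = m :=
    CCClist_card m _ _ hm (by omega) (by omega) (by omega)
  have hl2 : (Finset.Icc 1 (m - 2) ∪ ({m - 1, m + 2} : Finset ℕ)).card = m :=
    CCClist_card m _ _ hm (by omega) (by omega) (by omega)
  have hl3 : (Finset.Icc 1 (m - 2) ∪ ({m, m + 1} : Finset ℕ)).card = m :=
    CCClist_card m _ _ hm (by omega) (by omega) (by omega)
  have hl4 : (Finset.Icc 1 (m - 2) ∪ ({m, m + 2} : Finset ℕ)).card = m :=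
    CCClist_card m _ _ hm (by omega) (by omega) (by omega)
  have memB : ∀ {x p q : ℕ}, x ∈ Finset.Icc 1 (m - 2) →
      x ∈ Finset.Icc 1 (m - 2) ∪ ({p, q} : Finset ℕ) :=
    fun h => Finset.mem_union_left _ h
  have memP : ∀ {p q : ℕ}, p ∈ Finset.Icc 1 (m - 2) ∪ ({p, q} : Finset ℕ) :=
    fun {p q} => Finset.mem_union_right _ (by simp)
  have memQ : ∀ {p q : ℕ}, q ∈ Finset.Icc 1 (m - 2) ∪ ({p, q} : Finset ℕ) :=
    fun {p q} => Finset.mem_union_right _ (by simp)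
  have hnot : ∀ {x p q : ℕ}, m - 2 < x → x ≠ p → x ≠ q →
      x ∉ Finset.Icc 1 (m - 2) ∪ ({p, q} : Finset ℕ) := by
    intro x p q h1 h2 h3 hx
    simp only [Finset.mem_union, Finset.mem_Icc, Finset.mem_insert, Finset.mem_singleton] at hx
    omega
  have master : ∀ a b c1 c2 c3 c4 : ℕ,
      ((Finset.Icc 1 (m - 2) ∪ {m - 1, m + 1}) \ {a, b}).card = c1 →
      ((Finset.Icc 1 (m - 2) ∪ {m - 1, m + 2}) \ {a, b}).card = c2 →
      ((Finset.Icc 1 (m - 2) ∪ {m, m + 1}) \ {a, b}).card = c3 →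
      ((Finset.Icc 1 (m - 2) ∪ {m, m + 2}) \ {a, b}).card = c4 →
      ∏ j : Fin (4 * t), ((L (Sum.inr j)) \ {a, b}).card = c1 ^ t * c2 ^ t * c3 ^ t * c4 ^ t := by
    intro a b c1 c2 c3 c4 h1 h2 h3 h4
    apply CCCprod_four_blocks
    · intro j hj; rw [hy1 j hj]; exact h1
    · intro j hj1 hj2; rw [hy2 j hj1 hj2]; exact h2
    · intro j hj1 hj2; rw [hy3 j hj1 hj2]; exact h3
    · intro j hj; rw [hy4 j hj]; exact h4
  have e11 : ∀ a ∈ Finset.Icc 1 (m - 2), ∀ b ∈ Finset.Icc 1 (m - 2),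
      ∏ j : Fin (4 * t), ((L (Sum.inr j)) \ {a, b}).card =
        if a = b then (m - 1) ^ (4 * t) else (m - 2) ^ (4 * t) := by
    intro a ha b hb
    by_cases hab : a = b
    · subst hab
      rw [if_pos rfl, master a a (m - 1) (m - 1) (m - 1) (m - 1)
        (by rw [CCCcardA5 (memB ha), hl1]) (by rw [CCCcardA5 (memB ha), hl2])
        (by rw [CCCcardA5 (memB ha), hl3]) (by rw [CCCcardA5 (memB ha), hl4])]
      ring
    · rw [if_neg hab, master a b (m - 2) (m - 2) (m - 2) (m - 2)
        (by rw [CCCcardA1 (memB ha) (memB hb) hab, hl1])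
        (by rw [CCCcardA1 (memB ha) (memB hb) hab, hl2])
        (by rw [CCCcardA1 (memB ha) (memB hb) hab, hl3])
        (by rw [CCCcardA1 (memB ha) (memB hb) hab, hl4])]
      ring
  have e12 : ∀ a ∈ Finset.Icc 1 (m - 2), ∀ b ∈ ({m + 1, m + 2} : Finset ℕ),
      ∏ j : Fin (4 * t), ((L (Sum.inr j)) \ {a, b}).card =
        (m - 2) ^ (2 * t) * (m - 1) ^ (2 * t) := by
    intro a ha b hb
    have ha' := Finset.mem_Icc.mp ha
    rcases Finset.mem_insert.mp hb with rfl | hb'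
    · rw [master a (m + 1) (m - 2) (m - 1) (m - 2) (m - 1)
        (by rw [CCCcardA1 (memB ha) memQ (by omega), hl1])
        (by rw [CCCcardA2 (memB ha) (hnot (by omega) (by omega) (by omega)), hl2])
        (by rw [CCCcardA1 (memB ha) memQ (by omega), hl3])
        (by rw [CCCcardA2 (memB ha) (hnot (by omega) (by omega) (by omega)), hl4])]
      rw [two_mul, pow_add, pow_add]; ring
    · rw [Finset.mem_singleton] at hb'
      subst hb'
      rw [master a (m + 2) (m - 1) (m - 2) (m - 1) (m - 2)
        (by rw [CCCcardA2 (memB ha) (hnot (by omega) (by omega) (by omega)), hl1])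
        (by rw [CCCcardA1 (memB ha) memQ (by omega), hl2])
        (by rw [CCCcardA2 (memB ha) (hnot (by omega) (by omega) (by omega)), hl3])
        (by rw [CCCcardA1 (memB ha) memQ (by omega), hl4])]
      rw [two_mul, pow_add, pow_add]; ring
  have e21 : ∀ a ∈ ({m - 1, m} : Finset ℕ), ∀ b ∈ Finset.Icc 1 (m - 2),
      ∏ j : Fin (4 * t), ((L (Sum.inr j)) \ {a, b}).card =
        (m - 2) ^ (2 * t) * (m - 1) ^ (2 * t) := by
    intro a ha b hb
    have hb' := Finset.mem_Icc.mp hb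
    have ha' : a = m - 1 ∨ a = m := by simpa using ha
    rcases ha' with h | h <;> rw [h]
    · rw [master (m - 1) b (m - 2) (m - 2) (m - 1) (m - 1)
        (by rw [CCCcardA1 memP (memB hb) (by omega), hl1])
        (by rw [CCCcardA1 memP (memB hb) (by omega), hl2])
        (by rw [CCCcardA3 (hnot (by omega) (by omega) (by omega)) (memB hb), hl3])
        (by rw [CCCcardA3 (hnot (by omega) (by omega) (by omega)) (memB hb), hl4])]
      rw [two_mul, pow_add, pow_add]; ring
    · rw [master m b (m - 1) (m - 1) (m - 2) (m - 2)
        (by rw [CCCcardA3 (hnot (by omega) (by omega) (by omega)) (memB hb), hl1])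
        (by rw [CCCcardA3 (hnot (by omega) (by omega) (by omega)) (memB hb), hl2])
        (by rw [CCCcardA1 memP (memB hb) (by omega), hl3])
        (by rw [CCCcardA1 memP (memB hb) (by omega), hl4])]
      rw [two_mul, pow_add, pow_add]; ring
  have e22 : ∀ a ∈ ({m - 1, m} : Finset ℕ), ∀ b ∈ ({m + 1, m + 2} : Finset ℕ),
      ∏ j : Fin (4 * t), ((L (Sum.inr j)) \ {a, b}).card =
        (m - 2) ^ t * (m - 1) ^ (2 * t) * m ^ t := by
    intro a ha b hb
    have ha' : a = m - 1 ∨ a = m := by simpa using ha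
    have hb' : b = m + 1 ∨ b = m + 2 := by simpa using hb
    rcases ha' with h | h <;> rcases hb' with h2 | h2 <;> rw [h, h2]
    · rw [master (m - 1) (m + 1) (m - 2) (m - 1) (m - 1) m
        (by rw [CCCcardA1 memP memQ (by omega), hl1])
        (by rw [CCCcardA2 memP (hnot (by omega) (by omega) (by omega)), hl2])
        (by rw [CCCcardA3 (hnot (by omega) (by omega) (by omega)) memQ, hl3])
        (by rw [CCCcardA4 (hnot (by omega) (by omega) (by omega))
              (hnot (by omega) (by omega) (by omega)), hl4])]
      rw [two_mul, pow_add]; ring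
    · rw [master (m - 1) (m + 2) (m - 1) (m - 2) m (m - 1)
        (by rw [CCCcardA2 memP (hnot (by omega) (by omega) (by omega)), hl1])
        (by rw [CCCcardA1 memP memQ (by omega), hl2])
        (by rw [CCCcardA4 (hnot (by omega) (by omega) (by omega))
              (hnot (by omega) (by omega) (by omega)), hl3])
        (by rw [CCCcardA3 (hnot (by omega) (by omega) (by omega)) memQ, hl4])]
      rw [two_mul, pow_add]; ring
    · rw [master m (m + 1) (m - 1) m (m - 2) (m - 1)
        (by rw [CCCcardA3 (hnot (by omega) (by omega) (by omega)) memQ, hl1])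
        (by rw [CCCcardA4 (hnot (by omega) (by omega) (by omega))
              (hnot (by omega) (by omega) (by omega)), hl2])
        (by rw [CCCcardA1 memP memQ (by omega), hl3])
        (by rw [CCCcardA2 memP (hnot (by omega) (by omega) (by omega)), hl4])]
      rw [two_mul, pow_add]; ring
    · rw [master m (m + 2) m (m - 1) (m - 1) (m - 2)
        (by rw [CCCcardA4 (hnot (by omega) (by omega) (by omega))
              (hnot (by omega) (by omega) (by omega)), hl1])
        (by rw [CCCcardA3 (hnot (by omega) (by omega) (by omega)) memQ, hl2])
        (by rw [CCCcardA2 memP (hnot (by omega) (by omega) (by omega)), hl3])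
        (by rw [CCCcardA1 memP memQ (by omega), hl4])]
      rw [two_mul, pow_add]; ring
  have hd1 : Disjoint (Finset.Icc 1 (m - 2)) ({m - 1, m} : Finset ℕ) := by
    rw [Finset.disjoint_left]
    intro x hx
    simp only [Finset.mem_Icc] at hx
    simp only [Finset.mem_insert, Finset.mem_singleton]
    omega
  have hd2 : Disjoint (Finset.Icc 1 (m - 2)) ({m + 1, m + 2} : Finset ℕ) := by
    rw [Finset.disjoint_left]
    intro x hx
    simp only [Finset.mem_Icc] at hx
    simp only [Finset.mem_insert, Finset.mem_singleton]
    omega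
  have T11 : ∑ a ∈ Finset.Icc 1 (m - 2), ∑ b ∈ Finset.Icc 1 (m - 2),
      ∏ j : Fin (4 * t), ((L (Sum.inr j)) \ {a, b}).card =
      (m - 2) * ((m - 1) ^ (4 * t) + (m - 3) * (m - 2) ^ (4 * t)) := by
    have inner : ∀ a ∈ Finset.Icc 1 (m - 2),
        ∑ b ∈ Finset.Icc 1 (m - 2), ∏ j : Fin (4 * t), ((L (Sum.inr j)) \ {a, b}).card =
        (m - 1) ^ (4 * t) + (m - 3) * (m - 2) ^ (4 * t) := by
      intro a ha
      rw [Finset.sum_congr rfl (fun b hb => e11 a ha b hb), ← Finset.add_sum_erase _ _ ha,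
        if_pos rfl]
      congr 1
      rw [Finset.sum_congr rfl
        (fun b hb => if_neg (fun h => (Finset.ne_of_mem_erase hb) h.symm)),
        Finset.sum_const, Finset.card_erase_of_mem ha, hB, smul_eq_mul]
      congr 1
    rw [Finset.sum_congr rfl inner, Finset.sum_const, hB, smul_eq_mul]
  have T12 : ∑ a ∈ Finset.Icc 1 (m - 2), ∑ b ∈ ({m + 1, m + 2} : Finset ℕ),
      ∏ j : Fin (4 * t), ((L (Sum.inr j)) \ {a, b}).card =
      (m - 2) * (2 * ((m - 2) ^ (2 * t) * (m - 1) ^ (2 * t))) := by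
    have inner : ∀ a ∈ Finset.Icc 1 (m - 2),
        ∑ b ∈ ({m + 1, m + 2} : Finset ℕ),
          ∏ j : Fin (4 * t), ((L (Sum.inr j)) \ {a, b}).card =
        2 * ((m - 2) ^ (2 * t) * (m - 1) ^ (2 * t)) := by
      intro a ha
      rw [Finset.sum_insert (by simp), Finset.sum_singleton,
        e12 a ha (m + 1) (by simp), e12 a ha (m + 2) (by simp)]
      ring
    rw [Finset.sum_congr rfl inner, Finset.sum_const, hB, smul_eq_mul]
  have T21 : ∑ a ∈ ({m - 1, m} : Finset ℕ), ∑ b ∈ Finset.Icc 1 (m - 2),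
      ∏ j : Fin (4 * t), ((L (Sum.inr j)) \ {a, b}).card =
      2 * ((m - 2) * ((m - 2) ^ (2 * t) * (m - 1) ^ (2 * t))) := by
    have inner : ∀ a ∈ ({m - 1, m} : Finset ℕ),
        ∑ b ∈ Finset.Icc 1 (m - 2),
          ∏ j : Fin (4 * t), ((L (Sum.inr j)) \ {a, b}).card =
        (m - 2) * ((m - 2) ^ (2 * t) * (m - 1) ^ (2 * t)) := by
      intro a ha
      rw [Finset.sum_congr rfl (fun b hb => e21 a ha b hb), Finset.sum_const, hB, smul_eq_mul]
    rw [Finset.sum_congr rfl inner, Finset.sum_insert (by simp; omega), Finset.sum_singleton]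
    ring
  have T22 : ∑ a ∈ ({m - 1, m} : Finset ℕ), ∑ b ∈ ({m + 1, m + 2} : Finset ℕ),
      ∏ j : Fin (4 * t), ((L (Sum.inr j)) \ {a, b}).card =
      4 * ((m - 2) ^ t * (m - 1) ^ (2 * t) * m ^ t) := by
    have inner : ∀ a ∈ ({m - 1, m} : Finset ℕ),
        ∑ b ∈ ({m + 1, m + 2} : Finset ℕ),
          ∏ j : Fin (4 * t), ((L (Sum.inr j)) \ {a, b}).card =
        2 * ((m - 2) ^ t * (m - 1) ^ (2 * t) * m ^ t) := by
      intro a ha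
      rw [Finset.sum_insert (by simp), Finset.sum_singleton,
        e22 a ha (m + 1) (by simp), e22 a ha (m + 2) (by simp)]
      ring
    rw [Finset.sum_congr rfl inner, Finset.sum_insert (by simp; omega), Finset.sum_singleton]
    ring
  rw [CCCkey, hx1, hx2]
  rw [Finset.sum_union hd1]
  simp only [Finset.sum_union hd2]
  rw [Finset.sum_add_distrib, Finset.sum_add_distrib, T11, T12, T21, T22]
  have h1 : (m - 3) * (m - 2) ^ (4 * t + 1) = (m - 2) * ((m - 3) * (m - 2) ^ (4 * t)) := by ring
  have h2 : 4 * (m - 2) ^ (2 * t + 1) * (m - 1) ^ (2 * t) =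
      (m - 2) * (2 * ((m - 2) ^ (2 * t) * (m - 1) ^ (2 * t))) +
        2 * ((m - 2) * ((m - 2) ^ (2 * t) * (m - 1) ^ (2 * t))) := by ring
  rw [h1, h2]
  ring
end
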